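/- arXiv:0912.0047 — 5 statements merged into one kernel-verified Lean document; each statement's English description precedes it below -/
import Mathlib

section
/- Let λ > μ > 0 and let S ⊂ ℝ^d be a Borel set with Lebesgue measure L(S) ∈ (0,∞). Let X and Y be Poisson random variables with respective means λ·L(S) and μ·L(S). If there exists a deterministic Poisson thinning on S from λ to μ, then there is no integer k ≥ 0 such that both P(X = k+1) > P(Y = k+1) and P(X ≤ k+1) > P(Y ≤ k). -/
open MeasureTheory ProbabilityTheory

/-- The probability that a Poisson random variable with mean `lam` equals `n`. -/
noncomputable def poissonP (lam : ℝ) (n : ℕ) : ℝ :=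
  Real.exp (-lam) * lam ^ n / n.factorial

/-- The probability that a Poisson random variable with mean `lam` is at most `n`. -/
noncomputable def poissonCDF (lam : ℝ) (n : ℕ) : ℝ :=
  ∑ i ∈ Finset.range (n + 1), poissonP lam i

/-- The law of the simple point measure `δ_{U 1} + ⋯ + δ_{U n}` where `U 1, …, U n`
are i.i.d. with law `Q`. -/
noncomputable def configLaw {α : Type*} [MeasurableSpace α] (Q : Measure α) (n : ℕ) :
    Measure (Measure α) :=
  Measure.map (fun x : Fin n → α => ∑ i, Measure.dirac (x i)) (Measure.pi fun _ => Q)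

/-- The law of a homogeneous Poisson point process of intensity `lam` on `S`
(with respect to the reference measure `base`): the number of points is Poisson with
mean `lam * base S`, and conditionally on having `n` points they are i.i.d. with the
normalized restriction of `base` to `S`. -/
noncomputable def poissonPPLaw {α : Type*} [MeasurableSpace α] (base : Measure α) (lam : ℝ)
    (S : Set α) : Measure (Measure α) :=
  Measure.sum fun n : ℕ =>
    ENNReal.ofReal (poissonP (lam * (base S).toReal) n) •
      configLaw (ProbabilityTheory.cond base S) n

/-- A (deterministic, Poisson) thinning on `S` from `lam` to `mu`: a measurable map `f`
on simple point measures such that if `Π` has the law of a Poisson process of intensity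
`lam` on `S` then `f Π` has the law of a Poisson process of intensity `mu` on `S`, and
almost surely every point of `f Π` is a point of `Π`. -/
def IsThinning {α : Type*} [MeasurableSpace α] (base : Measure α) (lam mu : ℝ) (S : Set α)
    (f : Measure α → Measure α) : Prop :=
  Measurable f ∧ Measure.map f (poissonPPLaw base lam S) = poissonPPLaw base mu S ∧
    ∀ᵐ ν ∂ poissonPPLaw base lam S, f ν ≤ ν

open scoped ENNReal

set_option linter.unusedSectionVars false


section Aux
variable {α : Type*} [MeasurableSpace α]

lemma measurable_configMap (n : ℕ) :
    Measurable (fun x : Fin n → α => ∑ i, Measure.dirac (x i)) := by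
  apply Measure.measurable_of_measurable_coe
  intro s hs
  simp only [Measure.finset_sum_apply]
  exact Finset.measurable_sum _ fun i _ =>
    (Measure.measurable_coe hs).comp (Measure.measurable_dirac.comp (measurable_pi_apply i))

lemma configMap_mass (n : ℕ) (x : Fin n → α) :
    (∑ i, Measure.dirac (x i)) Set.univ = n := by
  simp [Measure.finset_sum_apply]

lemma measure_eq_of_le_mass {μ ν : Measure α} (h : μ ≤ ν) (hν : ν Set.univ ≠ ⊤)
    (he : μ Set.univ = ν Set.univ) : μ = ν := by
  ext s hs
  refine le_antisymm (Measure.le_iff'.mp h s) ?_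
  have h1 : μ sᶜ ≤ ν sᶜ := Measure.le_iff'.mp h sᶜ
  have h2 : μ s + μ sᶜ = ν s + ν sᶜ := by
    rw [measure_add_measure_compl hs, measure_add_measure_compl hs, he]
  have hfin : μ sᶜ ≠ ⊤ := by
    refine ne_top_of_le_ne_top hν ?_
    exact he ▸ measure_mono (Set.subset_univ _)
  have h3 : ν s + μ sᶜ ≤ μ s + μ sᶜ := h2 ▸ add_le_add (le_refl _) h1
  exact (ENNReal.add_le_add_iff_right hfin).mp h3

variable (Q : Measure α) [IsProbabilityMeasure Q]

lemma configLaw_apply (n : ℕ) {C : Set (Measure α)} (hC : MeasurableSet C) :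
    configLaw Q n C = (Measure.pi fun _ : Fin n => Q) ((fun x => ∑ i, Measure.dirac (x i)) ⁻¹' C) :=
  Measure.map_apply (measurable_configMap n) hC

lemma configLaw_eq_zero (n : ℕ) {C : Set (Measure α)} (hC : MeasurableSet C)
    (h : ∀ x : Fin n → α, (∑ i, Measure.dirac (x i)) ∉ C) : configLaw Q n C = 0 := by
  rw [configLaw_apply Q n hC]
  have : (fun x : Fin n → α => ∑ i, Measure.dirac (x i)) ⁻¹' C = ∅ :=
    Set.eq_empty_iff_forall_notMem.mpr h
  rw [this, measure_empty]

lemma configLaw_eq_one (n : ℕ) {C : Set (Measure α)} (hC : MeasurableSet C)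
    (h : ∀ x : Fin n → α, (∑ i, Measure.dirac (x i)) ∈ C) : configLaw Q n C = 1 := by
  rw [configLaw_apply Q n hC]
  have : (fun x : Fin n → α => ∑ i, Measure.dirac (x i)) ⁻¹' C = Set.univ :=
    Set.eq_univ_iff_forall.mpr h
  rw [this]
  exact measure_univ

end Aux

/-- if there is a deterministic Poisson thinning on `S` from `lam` to `mu`,
then there is no integer `k` with `P(X = k+1) > P(Y = k+1)` and `P(X ≤ k+1) > P(Y ≤ k)`,
where `X, Y` are Poisson with means `lam * L(S)` and `mu * L(S)`. -/
theorem statement1 {d : ℕ} (lam mu : ℝ) (hmu : 0 < mu) (hlm : mu < lam)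
    (S : Set (Fin d → ℝ)) (hS : MeasurableSet S)
    (hpos : 0 < volume S) (hfin : volume S < ⊤)
    (h : ∃ f : Measure (Fin d → ℝ) → Measure (Fin d → ℝ), IsThinning volume lam mu S f) :
    ¬ ∃ k : ℕ,
      poissonP (mu * (volume S).toReal) (k + 1) < poissonP (lam * (volume S).toReal) (k + 1) ∧
      poissonCDF (mu * (volume S).toReal) k < poissonCDF (lam * (volume S).toReal) (k + 1) := by
  rintro ⟨k, h1, h2⟩
  obtain ⟨f, hf, hmap, hae⟩ := h
  haveI hQ : IsProbabilityMeasure (ProbabilityTheory.cond (volume : Measure (Fin d → ℝ)) S) :=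
    cond_isProbabilityMeasure_of_finite hpos.ne' hfin.ne
  have hL : 0 < (volume S).toReal := ENNReal.toReal_pos hpos.ne' hfin.ne
  have hppn : ∀ (c : ℝ), 0 ≤ c → ∀ m : ℕ, 0 ≤ poissonP c m := fun c hc m =>
    div_nonneg (mul_nonneg (Real.exp_pos _).le (pow_nonneg hc m)) (Nat.cast_nonneg _)
  have hmun : (0:ℝ) ≤ mu * (volume S).toReal := (mul_pos hmu hL).le
  set n : ℕ := k + 1 with hn
  have hT : Measurable fun ν : Measure (Fin d → ℝ) => ν Set.univ :=
    Measure.measurable_coe MeasurableSet.univ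
  set Mn : Set (Measure (Fin d → ℝ)) := (fun ν => ν Set.univ) ⁻¹' {(n : ℝ≥0∞)} with hMn
  have hMnm : MeasurableSet Mn := hT (measurableSet_singleton _)
  set A : Set (Measure (Fin d → ℝ)) := Mn ∩ f ⁻¹' Mn with hAdef
  have hAm : MeasurableSet A := hMnm.inter (hf hMnm)
  set D : Set (Measure (Fin d → ℝ)) := (fun ν => ν Set.univ) ⁻¹' Set.Iio (n : ℝ≥0∞) with hDdef
  have hDm : MeasurableSet D := hT measurableSet_Iio
  set U : Set (Measure (Fin d → ℝ)) := (fun ν => ν Set.univ) ⁻¹' Set.Iic (n : ℝ≥0∞) with hUdef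
  have hUm : MeasurableSet U := hT measurableSet_Iic
  set G : Set (Measure (Fin d → ℝ)) := (fun ν => ν Set.univ) ⁻¹' Set.range ((↑) : ℕ → ℝ≥0∞)
    with hGdef
  have hGm : MeasurableSet G := hT (Set.countable_range _).measurableSet
  -- the point process law applied to measurable sets
  have Papp : ∀ (c : ℝ) {C : Set (Measure (Fin d → ℝ))}, MeasurableSet C →
      poissonPPLaw volume c S C = ∑' m : ℕ, ENNReal.ofReal (poissonP (c * (volume S).toReal) m) *
        configLaw (ProbabilityTheory.cond volume S) m C := by
    intro c C hC
    simp only [poissonPPLaw]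
    rw [Measure.sum_apply _ hC]
    simp only [Measure.smul_apply, smul_eq_mul]
  -- configLaw of a set of measures of mass n vanishes for m ≠ n
  have czero : ∀ m : ℕ, m ≠ n → configLaw (ProbabilityTheory.cond volume S) m A = 0 := by
    intro m hm
    refine configLaw_eq_zero _ m hAm fun x hx => ?_
    have h1' : (∑ i, Measure.dirac (x i)) Set.univ = (n : ℝ≥0∞) := hx.1
    rw [configMap_mass m x] at h1'
    exact hm (Nat.cast_injective h1')
  have hPA : ∀ c : ℝ, poissonPPLaw volume c S A =
      ENNReal.ofReal (poissonP (c * (volume S).toReal) n) *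
        configLaw (ProbabilityTheory.cond volume S) n A := by
    intro c
    rw [Papp c hAm]
    exact tsum_eq_single n fun m hm => by rw [czero m hm, mul_zero]
  -- a.e. fixed points on A
  have hfix : ∀ᵐ ν ∂ poissonPPLaw volume lam S, ν ∈ A → f ν = ν := by
    refine hae.mono fun ν hle hν => ?_
    have hν1 : ν Set.univ = (n : ℝ≥0∞) := hν.1
    have hν2 : (f ν) Set.univ = (n : ℝ≥0∞) := hν.2
    exact measure_eq_of_le_mass hle (by rw [hν1]; exact ENNReal.natCast_ne_top n)
      (by rw [hν1, hν2])
  -- step 1 : P_lam A ≤ P_mu A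
  have step1 : poissonPPLaw volume lam S A ≤ poissonPPLaw volume mu S A := by
    have hsub : (∀ᵐ ν ∂ poissonPPLaw volume lam S, ν ∈ A → ν ∈ f ⁻¹' A) :=
      hfix.mono fun ν hfx hν => by
        have := hfx hν
        simp only [Set.mem_preimage]
        rw [this]; exact hν
    calc poissonPPLaw volume lam S A ≤ poissonPPLaw volume lam S (f ⁻¹' A) :=
          measure_mono_ae hsub
      _ = (Measure.map f (poissonPPLaw volume lam S)) A := (Measure.map_apply hf hAm).symm
      _ = poissonPPLaw volume mu S A := by rw [hmap]
  -- conclude configLaw n A = 0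
  have hA0 : configLaw (ProbabilityTheory.cond volume S) n A = 0 := by
    by_contra hc
    have hcle : configLaw (ProbabilityTheory.cond volume S) n A ≤ 1 := by
      rw [← configLaw_eq_one (ProbabilityTheory.cond volume S) n MeasurableSet.univ
        fun _ => Set.mem_univ _]
      exact measure_mono (Set.subset_univ _)
    have hcnt : configLaw (ProbabilityTheory.cond volume S) n A ≠ ⊤ :=
      (lt_of_le_of_lt hcle ENNReal.one_lt_top).ne
    have hlt : ENNReal.ofReal (poissonP (mu * (volume S).toReal) n) <
        ENNReal.ofReal (poissonP (lam * (volume S).toReal) n) :=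
      (ENNReal.ofReal_lt_ofReal_iff (lt_of_le_of_lt (hppn _ hmun n) h1)).mpr h1
    have := step1
    rw [hPA lam, hPA mu] at this
    exact this.not_gt (by rw [mul_comm _ (configLaw _ n A), mul_comm _ (configLaw _ n A)]; exact ENNReal.mul_lt_mul_right hc hcnt hlt)
  have hPA0 : poissonPPLaw volume lam S A = 0 := by rw [hPA lam, hA0, mul_zero]
  -- a.e. the mass of f ν is a natural number
  have hint : ∀ᵐ ν ∂ poissonPPLaw volume lam S, f ν ∈ G := by
    have hz : ∀ m : ℕ, configLaw (ProbabilityTheory.cond volume S) m Gᶜ = 0 := by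
      intro m
      refine configLaw_eq_zero _ m hGm.compl fun x hx => ?_
      exact hx (⟨m, (configMap_mass m x).symm⟩ : _ ∈ Set.range _)
    have h0 : poissonPPLaw volume lam S (f ⁻¹' Gᶜ) = 0 := by
      rw [← Measure.map_apply hf hGm.compl, hmap, Papp mu hGm.compl]
      simp [hz]
    rw [ae_iff]
    exact h0
  -- main computation
  have keyL : ENNReal.ofReal (poissonCDF (lam * (volume S).toReal) (k+1)) =
      poissonPPLaw volume lam S U := by
    rw [Papp lam hUm]
    rw [tsum_eq_sum (s := Finset.range (n+1)) ?h0]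
    case h0 =>
      intro m hm
      have hnm : n < m := by simpa using Nat.lt_of_succ_le (Nat.not_lt.mp fun hlt' =>
        hm (Finset.mem_range.mpr hlt'))
      have : configLaw (ProbabilityTheory.cond volume S) m U = 0 := by
        refine configLaw_eq_zero _ m hUm fun x hx => ?_
        have hx' : ((m:ℝ≥0∞)) ≤ (n:ℝ≥0∞) := by
          have := hx; rwa [Set.mem_preimage, configMap_mass m x, Set.mem_Iic] at this
        exact absurd (Nat.cast_le.mp hx') (Nat.not_le.mpr hnm)
      rw [this, mul_zero]
    have hone : ∀ m ∈ Finset.range (n+1),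
        ENNReal.ofReal (poissonP (lam * (volume S).toReal) m) *
          configLaw (ProbabilityTheory.cond volume S) m U =
        ENNReal.ofReal (poissonP (lam * (volume S).toReal) m) := by
      intro m hm
      have hmn : m ≤ n := Nat.lt_succ_iff.mp (Finset.mem_range.mp hm)
      rw [configLaw_eq_one _ m hUm fun x => ?_, mul_one]
      rw [Set.mem_preimage, configMap_mass m x, Set.mem_Iic]
      exact Nat.cast_le.mpr hmn
    rw [Finset.sum_congr rfl hone, poissonCDF,
      ENNReal.ofReal_sum_of_nonneg fun i _ => hppn _ (mul_pos (hmu.trans hlm) hL).le i]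
  have keyR : poissonPPLaw volume mu S D =
      ENNReal.ofReal (poissonCDF (mu * (volume S).toReal) k) := by
    rw [Papp mu hDm]
    rw [tsum_eq_sum (s := Finset.range n) ?h0]
    case h0 =>
      intro m hm
      have hnm : n ≤ m := Nat.not_lt.mp fun hlt' => hm (Finset.mem_range.mpr hlt')
      have : configLaw (ProbabilityTheory.cond volume S) m D = 0 := by
        refine configLaw_eq_zero _ m hDm fun x hx => ?_
        have hx' : ((m:ℝ≥0∞)) < (n:ℝ≥0∞) := by
          have := hx; rwa [Set.mem_preimage, configMap_mass m x, Set.mem_Iio] at this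
        exact absurd (Nat.cast_lt.mp hx') (Nat.not_lt.mpr hnm)
      rw [this, mul_zero]
    have hone : ∀ m ∈ Finset.range n,
        ENNReal.ofReal (poissonP (mu * (volume S).toReal) m) *
          configLaw (ProbabilityTheory.cond volume S) m D =
        ENNReal.ofReal (poissonP (mu * (volume S).toReal) m) := by
      intro m hm
      have hmn : m < n := Finset.mem_range.mp hm
      rw [configLaw_eq_one _ m hDm fun x => ?_, mul_one]
      rw [Set.mem_preimage, configMap_mass m x, Set.mem_Iio]
      exact Nat.cast_lt.mpr hmn
    rw [Finset.sum_congr rfl hone, poissonCDF,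
      ENNReal.ofReal_sum_of_nonneg fun i _ => hppn _ hmun i]
  have key : ENNReal.ofReal (poissonCDF (lam * (volume S).toReal) (k+1)) ≤
      ENNReal.ofReal (poissonCDF (mu * (volume S).toReal) k) := by
    calc ENNReal.ofReal (poissonCDF (lam * (volume S).toReal) (k+1))
        = poissonPPLaw volume lam S U := keyL
      _ ≤ poissonPPLaw volume lam S (f ⁻¹' D ∪ A) := by
          refine measure_mono_ae ?_
          filter_upwards [hae, hint] with ν hle hG' hν
          obtain ⟨m, hm0⟩ := hG'
          have hm : (m : ℝ≥0∞) = (f ν) Set.univ := hm0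
          have hfm : (f ν) Set.univ ≤ ν Set.univ := Measure.le_iff'.mp hle Set.univ
          have hνn : ν Set.univ ≤ (n : ℝ≥0∞) := hν
          have hmn : (m : ℝ≥0∞) ≤ (n : ℝ≥0∞) := hm ▸ (hfm.trans hνn)
          rcases lt_or_eq_of_le (Nat.cast_le.mp hmn) with hlt' | heq
          · left
            show (f ν) Set.univ ∈ Set.Iio (n : ℝ≥0∞)
            rw [← hm]
            exact Set.mem_Iio.mpr (Nat.cast_lt.mpr hlt')
          · right
            have hfν : (f ν) Set.univ = (n : ℝ≥0∞) := by rw [← hm, heq]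
            have hνe : ν Set.univ = (n : ℝ≥0∞) :=
              le_antisymm hνn (hfν ▸ hfm)
            exact ⟨hνe, hfν⟩
      _ ≤ poissonPPLaw volume lam S (f ⁻¹' D) + poissonPPLaw volume lam S A :=
          measure_union_le _ _
      _ = poissonPPLaw volume mu S D := by
          rw [hPA0, add_zero, ← Measure.map_apply hf hDm, hmap]
      _ = ENNReal.ofReal (poissonCDF (mu * (volume S).toReal) k) := keyR
  have hpos2 : 0 < poissonCDF (lam * (volume S).toReal) (k+1) := by
    refine lt_of_le_of_lt ?_ h2
    exact Finset.sum_nonneg fun i _ => hppn _ hmun i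
  exact key.not_gt ((ENNReal.ofReal_lt_ofReal_iff hpos2).mpr h2)
end

section
/- Let λ > μ > 0, let Π be a homogeneous Poisson point process of intensity λ on [0,1], and let f be a deterministic Poisson thinning on [0,1] from λ to μ. Set X := Π([0,1]) and Y := f(Π)([0,1]), and let k ≥ 0 be an integer such that P(X = k+1) > P(Y = k+1). Then P(X = Y = k+1) = 0; that is, on the event that Π has exactly k+1 points, f almost surely deletes at least one point. -/
open MeasureTheory ProbabilityTheory
open scoped ENNReal

lemma measurable_sumDirac {α : Type*} [MeasurableSpace α] (n : ℕ) :
    Measurable (fun x : Fin n → α => ∑ i, Measure.dirac (x i)) := by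
  apply Measure.measurable_of_measurable_coe
  intro s hs
  simp only [Measure.finset_sum_apply]
  exact Finset.measurable_sum _ fun i _ =>
    ((Measure.measurable_coe hs).comp Measure.measurable_dirac).comp (measurable_pi_apply i)

abbrev S01 : Set ℝ := Set.Icc (0:ℝ) 1

lemma volume_S01 : (volume : Measure ℝ) S01 = 1 := by
  simp [Real.volume_Icc]

noncomputable abbrev Q01 : Measure ℝ := ProbabilityTheory.cond volume S01

lemma Q01_S01 : Q01 S01 = 1 := by
  rw [ProbabilityTheory.cond_apply measurableSet_Icc, volume_S01, Set.inter_self, volume_S01]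
  simp

instance : IsProbabilityMeasure Q01 := by
  constructor
  rw [ProbabilityTheory.cond_apply measurableSet_Icc, volume_S01, Set.inter_univ, volume_S01]
  simp

instance (n : ℕ) : IsProbabilityMeasure (configLaw Q01 n) :=
  Measure.isProbabilityMeasure_map (measurable_sumDirac n).aemeasurable

lemma measurableSet_count (s : Set ℝ) (hs : MeasurableSet s) (c : ℝ≥0∞) :
    MeasurableSet {ν : Measure ℝ | ν s = c} :=
  (Measure.measurable_coe hs) (measurableSet_singleton c)

/-- the good set -/
def G (n : ℕ) : Set (Measure ℝ) := {ν | ν S01 = n ∧ ν S01ᶜ = 0}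

lemma measurableSet_G (n : ℕ) : MeasurableSet (G n) :=
  (measurableSet_count _ measurableSet_Icc _).inter
    (measurableSet_count _ measurableSet_Icc.compl _)

lemma configLaw_G (n : ℕ) : configLaw Q01 n (G n) = 1 := by
  refine le_antisymm prob_le_one ?_
  rw [configLaw, Measure.map_apply (measurable_sumDirac n) (measurableSet_G n)]
  have hsub : Set.pi Set.univ (fun _ : Fin n => S01) ⊆
      (fun x : Fin n → ℝ => ∑ i, Measure.dirac (x i)) ⁻¹' G n := by
    intro x hx
    have hx' : ∀ i, x i ∈ S01 := fun i => hx i (Set.mem_univ i)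
    constructor
    · rw [Measure.finset_sum_apply]
      have : ∀ i : Fin n, Measure.dirac (x i) S01 = 1 := fun i => by
        rw [Measure.dirac_apply' _ measurableSet_Icc, Set.indicator_of_mem (hx' i)]
        rfl
      simp [this]
    · rw [Measure.finset_sum_apply]
      have : ∀ i : Fin n, Measure.dirac (x i) S01ᶜ = 0 := fun i => by
        rw [Measure.dirac_apply' _ measurableSet_Icc.compl,
          Set.indicator_of_notMem (by simp [hx' i])]
      simp [this]
  calc (1 : ℝ≥0∞) = Measure.pi (fun _ : Fin n => Q01) (Set.pi Set.univ fun _ => S01) := by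
        rw [Measure.pi_pi]; simp [Q01_S01]
    _ ≤ _ := measure_mono hsub

lemma configLaw_compl_G (n : ℕ) : configLaw Q01 n (G n)ᶜ = 0 := by
  rw [measure_compl (measurableSet_G n) (measure_ne_top _ _), configLaw_G, measure_univ, tsub_self]

lemma configLaw_count (n : ℕ) : configLaw Q01 n {ν : Measure ℝ | ν S01 = n} = 1 := by
  refine le_antisymm prob_le_one ?_
  rw [← configLaw_G n]
  exact measure_mono fun ν hν => hν.1

lemma configLaw_ne (m n : ℕ) (hmn : m ≠ n) (A : Set (Measure ℝ))
    (hsub : A ⊆ {ν | ν S01 = n}) : configLaw Q01 m A = 0 := by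
  refine measure_mono_null (fun ν hν => ?_) (configLaw_compl_G m)
  intro hG
  have h1 := hsub hν
  have h2 := hG.1
  rw [h1] at h2
  exact hmn (Nat.cast_injective h2.symm)

/-- slice lemma -/
lemma poissonPPLaw_slice (r : ℝ) (n : ℕ) (A : Set (Measure ℝ)) (hA : MeasurableSet A)
    (hsub : A ⊆ {ν | ν S01 = n}) :
    poissonPPLaw volume r S01 A = ENNReal.ofReal (poissonP r n) * configLaw Q01 n A := by
  rw [poissonPPLaw, Measure.sum_apply _ hA]
  have hr : r * ((volume : Measure ℝ) S01).toReal = r := by rw [volume_S01]; simp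
  rw [tsum_eq_single n]
  · rw [Measure.smul_apply, smul_eq_mul, hr]
  · intro m hmn
    rw [Measure.smul_apply, smul_eq_mul, configLaw_ne m n hmn A hsub, mul_zero]

lemma poissonPPLaw_count (r : ℝ) (n : ℕ) :
    poissonPPLaw volume r S01 {ν : Measure ℝ | ν S01 = n} = ENNReal.ofReal (poissonP r n) := by
  rw [poissonPPLaw_slice r n _ (measurableSet_count _ measurableSet_Icc _) (fun _ h => h),
    configLaw_count, mul_one]

lemma poissonPPLaw_ae_out (r : ℝ) :
    ∀ᵐ ν ∂ poissonPPLaw volume r S01, ν S01ᶜ = 0 := by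
  rw [ae_iff]
  have hA : MeasurableSet {ν : Measure ℝ | ¬ ν S01ᶜ = 0} :=
    (measurableSet_count _ measurableSet_Icc.compl 0).compl
  rw [poissonPPLaw, Measure.sum_apply _ hA]
  refine ENNReal.tsum_eq_zero.2 fun m => ?_
  rw [Measure.smul_apply, smul_eq_mul]
  have : configLaw Q01 m {ν : Measure ℝ | ¬ ν S01ᶜ = 0} = 0 :=
    measure_mono_null (fun ν (hν : ¬ ν S01ᶜ = 0) (hG : ν ∈ G m) => hν hG.2)
      (configLaw_compl_G m)
  rw [this, mul_zero]

/-- A sub-measure with full mass concentrated on S01 is equal. -/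
lemma eq_of_le_count (ρ ν : Measure ℝ) (hle : ρ ≤ ν) (hout : ν S01ᶜ = 0)
    (n : ℕ) (hν : ν S01 = n) (hρ : ρ S01 = n) : ρ = ν := by
  have hρout : ρ S01ᶜ = 0 := le_antisymm (hout ▸ hle _) (zero_le)
  ext s hs
  refine le_antisymm (hle _) ?_
  have hcount : ∀ μ' : Measure ℝ, μ' S01ᶜ = 0 → μ' s ≤ μ' (S01 ∩ s) := by
    intro μ' hμ'
    have h1 : μ' (s \ S01) = 0 :=
      measure_mono_null (fun x (hx : x ∈ s \ S01) => hx.2) hμ'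
    calc μ' s ≤ μ' (S01 ∩ s) + μ' (s \ S01) := by
          refine (measure_mono ?_).trans (measure_union_le _ _)
          intro x hx
          by_cases hxS : x ∈ S01
          · exact Or.inl ⟨hxS, hx⟩
          · exact Or.inr ⟨hx, hxS⟩
      _ = μ' (S01 ∩ s) := by rw [h1, add_zero]
  -- key: ν (S01 ∩ s) ≤ ρ (S01 ∩ s)
  have hsplitν : ν (S01 ∩ s) + ν (S01 \ s) = ν S01 := measure_inter_add_diff S01 hs
  have hsplitρ : ρ (S01 ∩ s) + ρ (S01 \ s) = ρ S01 := measure_inter_add_diff S01 hs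
  have hfin : ν (S01 \ s) ≠ ∞ := by
    refine ne_top_of_le_ne_top ?_ (measure_mono Set.diff_subset)
    rw [hν]; exact ENNReal.natCast_ne_top n
  have hfin' : ρ (S01 \ s) ≠ ∞ :=
    ne_top_of_le_ne_top hfin (hle _)
  have hkey : ν (S01 ∩ s) ≤ ρ (S01 ∩ s) := by
    have e1 : ν (S01 ∩ s) = (n : ℝ≥0∞) - ν (S01 \ s) := by
      refine ENNReal.eq_sub_of_add_eq hfin ?_
      rw [hsplitν, hν]
    have e2 : ρ (S01 ∩ s) = (n : ℝ≥0∞) - ρ (S01 \ s) := by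
      refine ENNReal.eq_sub_of_add_eq hfin' ?_
      rw [hsplitρ, hρ]
    rw [e1, e2]
    exact tsub_le_tsub_left (hle _) _
  calc ν s ≤ ν (S01 ∩ s) := hcount ν hout
    _ ≤ ρ (S01 ∩ s) := hkey
    _ ≤ ρ s := measure_mono Set.inter_subset_right

/-- if `PP` is a Poisson process of intensity `lam` on `[0,1]`, `f` is a
thinning from `lam` to `mu`, and `k` is such that `P(PP([0,1]) = k+1) > P(f(PP)([0,1]) = k+1)`,
then almost surely not both `PP([0,1])` and `f(PP)([0,1])` equal `k+1`. -/
theorem statement3 (lam mu : ℝ) (hmu : 0 < mu) (hlm : mu < lam)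
    {Ω : Type*} [MeasurableSpace Ω] (P : Measure Ω) [IsProbabilityMeasure P]
    (PP : Ω → Measure ℝ) (hPPmeas : Measurable PP)
    (hPP : P.map PP = poissonPPLaw volume lam (Set.Icc (0:ℝ) 1))
    (f : Measure ℝ → Measure ℝ)
    (hf : IsThinning volume lam mu (Set.Icc (0:ℝ) 1) f)
    (k : ℕ)
    (hk : P {ω | f (PP ω) (Set.Icc (0:ℝ) 1) = ((k + 1 : ℕ) : ℝ≥0∞)}
        < P {ω | PP ω (Set.Icc (0:ℝ) 1) = ((k + 1 : ℕ) : ℝ≥0∞)}) :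
    P {ω | PP ω (Set.Icc (0:ℝ) 1) = ((k + 1 : ℕ) : ℝ≥0∞)
        ∧ f (PP ω) (Set.Icc (0:ℝ) 1) = ((k + 1 : ℕ) : ℝ≥0∞)} = 0 := by
  obtain ⟨hfm, hfmap, hfle⟩ := hf
  set n : ℕ := k + 1 with hn
  set L := poissonPPLaw volume lam S01 with hL
  set M := poissonPPLaw volume mu S01 with hM
  set N : Set (Measure ℝ) := {ν | ν S01 = (n : ℝ≥0∞)} with hNdef
  have measN : MeasurableSet N := measurableSet_count _ measurableSet_Icc _
  set B : Set (Measure ℝ) := {ν | ν S01 = (n : ℝ≥0∞) ∧ f ν S01 = (n : ℝ≥0∞)} with hBdef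
  have hBeq : B = N ∩ f ⁻¹' N := rfl
  have measB : MeasurableSet B := hBeq ▸ (measN.inter (hfm measN))
  -- translate hk
  have e1 : P {ω | PP ω (Set.Icc (0:ℝ) 1) = ((n : ℕ) : ℝ≥0∞)} = L N := by
    have h := Measure.map_apply (μ := P) hPPmeas measN
    rw [hPP] at h
    exact h.symm
  have e2 : P {ω | f (PP ω) (Set.Icc (0:ℝ) 1) = ((n : ℕ) : ℝ≥0∞)} = M N := by
    have h1 : M N = L (f ⁻¹' N) := by
      rw [← hfmap, Measure.map_apply hfm measN]
    have h2 := Measure.map_apply (μ := P) hPPmeas (hfm measN)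
    rw [hPP] at h2
    rw [h1, h2]
    rfl
  have hLN : L N = ENNReal.ofReal (poissonP lam n) := poissonPPLaw_count lam n
  have hMN : M N = ENNReal.ofReal (poissonP mu n) := poissonPPLaw_count mu n
  have hk' : ENNReal.ofReal (poissonP mu n) < ENNReal.ofReal (poissonP lam n) := by
    rw [← hLN, ← hMN, ← e1, ← e2]
    exact hk
  set C := configLaw Q01 n B with hC
  have hLB : L B = ENNReal.ofReal (poissonP lam n) * C :=
    poissonPPLaw_slice lam n B measB (fun ν h => h.1)
  have hMB : M B = ENNReal.ofReal (poissonP mu n) * C :=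
    poissonPPLaw_slice mu n B measB (fun ν h => h.1)
  -- B ≤ᵐ f ⁻¹' B
  have hmono : L B ≤ L (f ⁻¹' B) := by
    refine measure_mono_ae ?_
    filter_upwards [hfle, poissonPPLaw_ae_out lam] with ν h1 h2
    intro hB'
    have hfeq : f ν = ν := eq_of_le_count (f ν) ν h1 h2 n hB'.1 hB'.2
    show f ν ∈ B
    exact ⟨by rw [hfeq]; exact hB'.1, by rw [hfeq]; exact hB'.2⟩
  have hLf : L (f ⁻¹' B) = M B := by
    rw [← hfmap, Measure.map_apply hfm measB]
  have hchain : ENNReal.ofReal (poissonP lam n) * C ≤ ENNReal.ofReal (poissonP mu n) * C := by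
    rw [← hLB, ← hMB, ← hLf]
    exact hmono
  have hC0 : C = 0 := by
    by_contra hC0
    have hCfin : C ≠ ∞ := measure_ne_top _ _
    have := (ENNReal.mul_le_mul_iff_left hC0 hCfin).1 hchain
    exact absurd this (not_le.2 hk')
  have : P {ω | PP ω (Set.Icc (0:ℝ) 1) = ((n : ℕ) : ℝ≥0∞)
      ∧ f (PP ω) (Set.Icc (0:ℝ) 1) = ((n : ℕ) : ℝ≥0∞)} = L B := by
    have h := Measure.map_apply (μ := P) hPPmeas measB
    rw [hPP] at h
    exact h.symm
  rw [this, hLB, hC0, mul_zero]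
end

section
/- For every δ with 0 < δ < 1 there exists μ_0 > 0 such that for all μ ≥ μ_0, setting λ = μ + δ, there exists an integer k ≥ 0 such that, for Poisson random variables X and Y with respective means λ and μ, both P(X = k+1) > P(Y = k+1) and P(X ≤ k+1) > P(Y ≤ k) hold. Consequently no deterministic Poisson thinning on [0,1] from μ+δ to μ exists for such μ, i.e. λ_c(μ) ≥ μ + 1 − o(1) as μ → ∞. -/
open MeasureTheory ProbabilityTheory
open scoped ENNReal

lemma poissonP_pos {lam : ℝ} (h : 0 < lam) (n : ℕ) : 0 < poissonP lam n := by
  unfold poissonP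
  have := Nat.factorial_pos n
  positivity

lemma poissonP_nonneg {lam : ℝ} (h : 0 ≤ lam) (n : ℕ) : 0 ≤ poissonP lam n := by
  unfold poissonP; positivity

lemma poissonCDF_nonneg {lam : ℝ} (h : 0 ≤ lam) (n : ℕ) : 0 ≤ poissonCDF lam n :=
  Finset.sum_nonneg fun i _ => poissonP_nonneg h i

lemma poissonCDF_succ (lam : ℝ) (n : ℕ) :
    poissonCDF lam (n + 1) = poissonCDF lam n + poissonP lam (n + 1) :=
  Finset.sum_range_succ _ _

lemma poissonP_eq_exp {lam : ℝ} (h : 0 < lam) (n : ℕ) :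
    poissonP lam n = Real.exp (-lam + n * Real.log lam) / n.factorial := by
  unfold poissonP
  rw [Real.exp_add, Real.exp_nat_mul, Real.exp_log h]

lemma poissonP_lt_poissonP {a b : ℝ} (ha : 0 < a) (hb : 0 < b) (n : ℕ)
    (h : -a + n * Real.log a < -b + n * Real.log b) : poissonP a n < poissonP b n := by
  rw [poissonP_eq_exp ha, poissonP_eq_exp hb]
  have hf : (0:ℝ) < n.factorial := by exact_mod_cast Nat.factorial_pos n
  rw [div_lt_div_iff_of_pos_right hf]
  exact Real.exp_lt_exp.2 h

lemma poissonP_le_max {t : ℝ} (ht : 0 < t) (n : ℕ) :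
    poissonP t n ≤ poissonP n n := by
  rcases Nat.eq_zero_or_pos n with h0 | hpos
  · subst h0
    simp only [poissonP, pow_zero, Nat.factorial_zero, Nat.cast_one, mul_one, div_one, neg_zero,
      Real.exp_zero]
    exact (Real.exp_le_one_iff.2 (by linarith)).trans_eq (by norm_num)
  · have hn : (0:ℝ) < n := by exact_mod_cast hpos
    rw [poissonP_eq_exp ht, poissonP_eq_exp hn]
    have hf : (0:ℝ) < n.factorial := by exact_mod_cast Nat.factorial_pos n
    apply div_le_div_of_nonneg_right ?_ hf.le
    apply Real.exp_le_exp.2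
    have hlog : Real.log t - Real.log n ≤ t / n - 1 := by
      have := Real.log_le_sub_one_of_pos (x := t / n) (by positivity)
      rwa [Real.log_div (ne_of_gt ht) (ne_of_gt hn)] at this
    have h2 : (n:ℝ) * (Real.log t - Real.log n) ≤ n * (t / n - 1) :=
      mul_le_mul_of_nonneg_left hlog (le_of_lt hn)
    have h3 : (n:ℝ) * (t / n - 1) = t - n := by field_simp
    nlinarith

lemma hasDerivAt_poissonP_zero (t : ℝ) :
    HasDerivAt (fun s => poissonP s 0) (-poissonP t 0) t := by
  have h1 : HasDerivAt (fun s : ℝ => Real.exp (-s)) (-Real.exp (-t)) t := by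
    simpa [Function.comp_def] using (Real.hasDerivAt_exp (-t)).comp t (hasDerivAt_neg t)
  have : (fun s => poissonP s 0) = fun s : ℝ => Real.exp (-s) := by
    funext s; simp [poissonP]
  rw [this]
  convert h1 using 1
  simp [poissonP]

lemma hasDerivAt_poissonP_succ (i : ℕ) (t : ℝ) :
    HasDerivAt (fun s => poissonP s (i + 1)) (poissonP t i - poissonP t (i + 1)) t := by
  have h1 : HasDerivAt (fun s : ℝ => Real.exp (-s)) (-Real.exp (-t)) t := by
    simpa [Function.comp_def] using (Real.hasDerivAt_exp (-t)).comp t (hasDerivAt_neg t)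
  have h2 : HasDerivAt (fun s : ℝ => s ^ (i + 1)) ((i + 1 : ℕ) * t ^ i) t := by
    simpa using hasDerivAt_pow (i + 1) t
  have h3 := (h1.mul h2).div_const ((i + 1).factorial : ℝ)
  have heq : (fun s => poissonP s (i + 1)) =
      fun s : ℝ => Real.exp (-s) * s ^ (i + 1) / ((i + 1).factorial : ℝ) := by
    funext s; simp [poissonP]
  rw [heq]
  refine h3.congr_deriv (Eq.symm ?_)
  have hfact : ((i + 1).factorial : ℝ) = (i + 1) * (i.factorial : ℝ) := by
    rw [Nat.factorial_succ]; push_cast; ring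
  have hf0 : (i.factorial : ℝ) ≠ 0 := by exact_mod_cast (Nat.factorial_pos i).ne'
  simp only [poissonP]
  rw [hfact]
  have h1i : ((i:ℝ) + 1) ≠ 0 := by positivity
  field_simp
  push_cast
  ring

lemma hasDerivAt_poissonCDF (m : ℕ) (t : ℝ) :
    HasDerivAt (fun s => poissonCDF s m) (-poissonP t m) t := by
  induction m with
  | zero =>
      have : (fun s => poissonCDF s 0) = fun s => poissonP s 0 := by
        funext s; simp [poissonCDF]
      rw [this]; exact hasDerivAt_poissonP_zero t
  | succ n ih =>
      have h := ih.add (hasDerivAt_poissonP_succ n t)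
      have heq : (fun s => poissonCDF s (n + 1)) =
          fun s => poissonCDF s n + poissonP s (n + 1) := by
        funext s; exact poissonCDF_succ s n
      rw [heq]
      refine h.congr_deriv (Eq.symm ?_)
      ring

lemma cdf_diff_bound {mu lam : ℝ} (h0 : 0 < mu) (hml : mu ≤ lam) (m : ℕ) :
    poissonCDF mu m - poissonCDF lam m ≤ poissonP m m * (lam - mu) := by
  have conv : Convex ℝ (Set.Icc mu lam) := convex_Icc _ _
  have hd : ∀ x ∈ Set.Icc mu lam,
      HasDerivWithinAt (fun s => poissonCDF s m) (-poissonP x m) (Set.Icc mu lam) x :=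
    fun x _ => (hasDerivAt_poissonCDF m x).hasDerivWithinAt
  have hb : ∀ x ∈ Set.Icc mu lam, ‖-poissonP x m‖ ≤ poissonP m m := by
    intro x hx
    have hx0 : 0 < x := lt_of_lt_of_le h0 hx.1
    rw [norm_neg, Real.norm_eq_abs, abs_of_nonneg (poissonP_nonneg hx0.le m)]
    exact poissonP_le_max hx0 m
  have key := conv.norm_image_sub_le_of_norm_hasDerivWithin_le hd hb
    (Set.left_mem_Icc.2 hml) (Set.right_mem_Icc.2 hml)
  rw [Real.norm_eq_abs, Real.norm_eq_abs, abs_of_nonneg (by linarith : (0:ℝ) ≤ lam - mu)] at key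
  have := neg_abs_le (poissonCDF lam m - poissonCDF mu m)
  linarith [abs_nonneg (poissonCDF lam m - poissonCDF mu m)]

lemma exists_good_k (δ mu : ℝ) (hδ0 : 0 < δ) (hδ1 : δ < 1) (h2 : 2 ≤ mu)
    (hbig : 4 / (-Real.log δ) < mu) :
    ∃ k : ℕ, poissonP mu (k + 1) < poissonP (mu + δ) (k + 1) ∧
      poissonCDF mu k < poissonCDF (mu + δ) (k + 1) := by
  have hmu0 : 0 < mu := by linarith
  have hu0 : 0 < δ / mu := div_pos hδ0 hmu0
  set u := δ / mu with hu
  set Lg := Real.log (1 + u) with hL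
  have hL0 : 0 < Lg := Real.log_pos (by linarith)
  have hLlt : Lg < u := by
    have := Real.log_lt_sub_one_of_pos (x := 1 + u) (by linarith) (by linarith)
    rw [← hL] at this; linarith
  have hLge : δ / (mu + δ) ≤ Lg := by
    have h := Real.log_le_sub_one_of_pos (x := 1 / (1 + u)) (by positivity)
    rw [Real.log_div one_ne_zero (by positivity), Real.log_one, ← hL] at h
    have h1u : (0:ℝ) < 1 + u := by linarith
    have e1 : (1:ℝ) / (1 + u) - 1 = -(u / (1 + u)) := by field_simp; ring
    have e2 : u / (1 + u) = δ / (mu + δ) := by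
      rw [hu]; field_simp
    rw [e1, e2] at h; linarith
  set x := δ / Lg with hx
  have hxmu : mu < x := by
    rw [hx, lt_div_iff₀ hL0]
    calc mu * Lg < mu * u := by exact mul_lt_mul_of_pos_left hLlt hmu0
    _ = δ := by rw [hu]; field_simp
  have hxle : x ≤ mu + δ := by
    rw [hx, div_le_iff₀ hL0]
    have := mul_le_mul_of_nonneg_left hLge (by linarith : (0:ℝ) ≤ mu + δ)
    calc δ = (mu + δ) * (δ / (mu + δ)) := by field_simp
    _ ≤ (mu + δ) * Lg := this
  set k := ⌊x⌋₊ with hk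
  have hk1 : x < (k:ℝ) + 1 := Nat.lt_floor_add_one x
  have hkx : (k:ℝ) ≤ x := Nat.floor_le (by positivity)
  have hn1 : mu < (k:ℝ) + 1 := by linarith
  have hn2 : (k:ℝ) + 1 ≤ mu + 2 := by linarith
  have hlog : Real.log (mu + δ) - Real.log mu = Lg := by
    have e : (mu + δ) / mu = 1 + u := by rw [hu]; field_simp
    rw [hL, ← e, ← Real.log_div (by linarith) (ne_of_gt hmu0)]
  have hcond1 : poissonP mu (k + 1) < poissonP (mu + δ) (k + 1) := by
    apply poissonP_lt_poissonP hmu0 (by linarith)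
    push_cast
    have hd : δ = x * Lg := by rw [hx]; field_simp
    nlinarith [hk1, hL0]
  refine ⟨k, hcond1, ?_⟩
  -- key inequality: δ * poissonP (k+1) (k+1) < poissonP mu (k+1)
  have hkey : δ * poissonP ((k + 1 : ℕ) : ℝ) (k + 1) < poissonP mu (k + 1) := by
    set n : ℝ := ((k + 1 : ℕ) : ℝ) with hn
    have hnr : n = (k:ℝ) + 1 := by push_cast [hn]; ring
    have hnpos : (0:ℝ) < n := by rw [hnr]; linarith
    rw [poissonP_eq_exp hnpos, poissonP_eq_exp hmu0]
    have hc : (0:ℝ) < ((k + 1).factorial : ℝ) := by exact_mod_cast Nat.factorial_pos (k + 1)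
    rw [← mul_div_assoc, div_lt_div_iff_of_pos_right hc, ← Real.exp_log hδ0, ← Real.exp_add,
      Real.exp_lt_exp, ← hn]
    -- goal: log δ + (-n + n * log n) < -mu + n * log mu
    have hld : Real.log δ < 0 := Real.log_neg hδ0 hδ1
    have hd4 : 4 < mu * (-Real.log δ) := by
      rw [div_lt_iff₀ (by linarith)] at hbig; linarith
    set a : ℝ := n - mu with hadef
    have ha0 : 0 < a := by rw [hadef, hnr]; linarith
    have ha2 : a ≤ 2 := by rw [hadef, hnr]; linarith
    have hlog2 : Real.log n - Real.log mu ≤ a / mu := by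
      have hh := Real.log_le_sub_one_of_pos (x := n / mu) (by positivity)
      rw [Real.log_div (ne_of_gt hnpos) (ne_of_gt hmu0)] at hh
      have : n / mu - 1 = a / mu := by rw [hadef]; field_simp
      linarith
    have hmul : n * (Real.log n - Real.log mu) ≤ n * (a / mu) :=
      mul_le_mul_of_nonneg_left hlog2 hnpos.le
    have hna : n = mu + a := by rw [hadef]; ring
    have hfrac : n * (a / mu) = a + a ^ 2 / mu := by rw [hna]; field_simp
    have hsq : a ^ 2 / mu ≤ 4 / mu := by
      apply div_le_div_of_nonneg_right ?_ hmu0.le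
      nlinarith
    have hld2 : Real.log δ < -(4 / mu) := by
      have h44 : 4 / mu < -Real.log δ := by rw [div_lt_iff₀ hmu0]; linarith
      linarith
    have hdist : n * (Real.log n - Real.log mu) = n * Real.log n - n * Real.log mu := by ring
    have hfin : n * Real.log n - n * Real.log mu ≤ a + a ^ 2 / mu := by
      linarith [hmul, hdist, hfrac]
    linarith [hfin, hld2, hsq]
  have hbound := cdf_diff_bound hmu0 (by linarith : mu ≤ mu + δ) (k + 1)
  have hcdfs := poissonCDF_succ mu k
  have hdd : mu + δ - mu = δ := by ring
  rw [hdd] at hbound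
  have hcm : poissonP ((k + 1 : ℕ) : ℝ) (k + 1) * δ = δ * poissonP ((k + 1 : ℕ) : ℝ) (k + 1) :=
    mul_comm _ _
  linarith [hbound, hkey, hcdfs, hcm]



section Measures

lemma volume_Icc01 : (volume : Measure ℝ) (Set.Icc 0 1) = 1 := by
  rw [Real.volume_Icc]; norm_num

/-- the conditioned measure is a probability measure -/
lemma cond_Icc_prob : IsProbabilityMeasure ((volume : Measure ℝ)[|Set.Icc 0 1]) := by
  apply ProbabilityTheory.cond_isProbabilityMeasure_of_finite
  · rw [volume_Icc01]; exact one_ne_zero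
  · rw [volume_Icc01]; exact ENNReal.one_ne_top

lemma configLaw_prob (n : ℕ) :
    IsProbabilityMeasure (configLaw ((volume : Measure ℝ)[|Set.Icc 0 1]) n) := by
  have := cond_Icc_prob
  exact Measure.isProbabilityMeasure_map (measurable_sumDirac n).aemeasurable

lemma measurableSet_eqCount (n : ℕ) :
    MeasurableSet {ν : Measure ℝ | ν Set.univ = (n : ℝ≥0∞)} := by
  exact (Measure.measurable_coe MeasurableSet.univ) (measurableSet_singleton _)

lemma measurableSet_leCount (n : ℕ) :
    MeasurableSet {ν : Measure ℝ | ν Set.univ ≤ (n : ℝ≥0∞)} := by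
  exact (Measure.measurable_coe MeasurableSet.univ) measurableSet_Iic

lemma configLaw_eqCount (n : ℕ) :
    configLaw ((volume : Measure ℝ)[|Set.Icc 0 1]) n {ν : Measure ℝ | ν Set.univ = (n : ℝ≥0∞)}
      = 1 := by
  have := cond_Icc_prob
  rw [configLaw, Measure.map_apply (measurable_sumDirac n) (measurableSet_eqCount n)]
  have : (fun x : Fin n → ℝ => ∑ i, Measure.dirac (x i)) ⁻¹'
      {ν : Measure ℝ | ν Set.univ = (n : ℝ≥0∞)} = Set.univ := by
    ext x
    simp only [Set.mem_preimage, Set.mem_setOf_eq, Set.mem_univ, iff_true]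
    rw [Measure.coe_finset_sum]
    simp
  rw [this]
  exact measure_univ

lemma configLaw_null_of_disjoint (n : ℕ) (D : Set (Measure ℝ))
    (hD : ∀ ν ∈ D, ν Set.univ ≠ (n : ℝ≥0∞)) :
    configLaw ((volume : Measure ℝ)[|Set.Icc 0 1]) n D = 0 := by
  have h1 := configLaw_eqCount n
  have := cond_Icc_prob
  have hsub : D ⊆ {ν : Measure ℝ | ν Set.univ = (n : ℝ≥0∞)}ᶜ := fun ν hν => hD ν hν
  apply measure_mono_null hsub
  have hprob := configLaw_prob n
  rw [measure_compl (measurableSet_eqCount n) (measure_ne_top _ _), h1, measure_univ]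
  simp

end Measures

section PPL

lemma ppl_eq (lam : ℝ) : poissonPPLaw (volume : Measure ℝ) lam (Set.Icc 0 1) =
    Measure.sum (fun n : ℕ => ENNReal.ofReal (poissonP lam n) •
      configLaw ((volume : Measure ℝ)[|Set.Icc 0 1]) n) := by
  rw [poissonPPLaw, volume_Icc01]
  norm_num

lemma configLaw_leCount (n m : ℕ) :
    configLaw ((volume : Measure ℝ)[|Set.Icc 0 1]) n {ν : Measure ℝ | ν Set.univ ≤ (m : ℝ≥0∞)}
      = if n ≤ m then 1 else 0 := by
  have := cond_Icc_prob
  rw [configLaw, Measure.map_apply (measurable_sumDirac n) (measurableSet_leCount m)]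
  have hcount : ∀ x : Fin n → ℝ, (∑ i, Measure.dirac (x i)) Set.univ = (n : ℝ≥0∞) := by
    intro x
    rw [Measure.coe_finset_sum]
    simp
  by_cases h : n ≤ m
  · have : (fun x : Fin n → ℝ => ∑ i, Measure.dirac (x i)) ⁻¹'
        {ν : Measure ℝ | ν Set.univ ≤ (m : ℝ≥0∞)} = Set.univ := by
      ext x
      simp only [Set.mem_preimage, Set.mem_setOf_eq, Set.mem_univ, iff_true, hcount x]
      exact_mod_cast Nat.cast_le.2 h
    rw [this, measure_univ, if_pos h]
  · have : (fun x : Fin n → ℝ => ∑ i, Measure.dirac (x i)) ⁻¹'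
        {ν : Measure ℝ | ν Set.univ ≤ (m : ℝ≥0∞)} = ∅ := by
      ext x
      simp only [Set.mem_preimage, Set.mem_setOf_eq, Set.mem_empty_iff_false, iff_false, hcount x]
      intro hc
      exact h (by exact_mod_cast hc)
    rw [this, if_neg h]
    simp

lemma ppl_apply_subset (lam : ℝ) (n : ℕ) (D : Set (Measure ℝ)) (hD : MeasurableSet D)
    (hsub : D ⊆ {ν : Measure ℝ | ν Set.univ = (n : ℝ≥0∞)}) :
    poissonPPLaw (volume : Measure ℝ) lam (Set.Icc 0 1) D =
      ENNReal.ofReal (poissonP lam n) *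
        configLaw ((volume : Measure ℝ)[|Set.Icc 0 1]) n D := by
  rw [ppl_eq, Measure.sum_apply _ hD]
  rw [tsum_eq_single n]
  · rw [Measure.smul_apply, smul_eq_mul]
  · intro m hm
    rw [Measure.smul_apply, smul_eq_mul]
    have : configLaw ((volume : Measure ℝ)[|Set.Icc 0 1]) m D = 0 := by
      apply configLaw_null_of_disjoint
      intro ν hν
      rw [hsub hν]
      intro hc
      exact hm (by exact_mod_cast hc.symm)
    rw [this, mul_zero]

lemma ppl_apply_leCount (lam : ℝ) (hlam : 0 ≤ lam) (m : ℕ) :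
    poissonPPLaw (volume : Measure ℝ) lam (Set.Icc 0 1)
      {ν : Measure ℝ | ν Set.univ ≤ (m : ℝ≥0∞)} = ENNReal.ofReal (poissonCDF lam m) := by
  rw [ppl_eq, Measure.sum_apply _ (measurableSet_leCount m)]
  have hterm : ∀ n : ℕ, (ENNReal.ofReal (poissonP lam n) •
      configLaw ((volume : Measure ℝ)[|Set.Icc 0 1]) n)
        {ν : Measure ℝ | ν Set.univ ≤ (m : ℝ≥0∞)}
      = if n ≤ m then ENNReal.ofReal (poissonP lam n) else 0 := by
    intro n
    rw [Measure.smul_apply, smul_eq_mul, configLaw_leCount]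
    split_ifs <;> simp
  simp only [hterm]
  have hz : ∀ n ∉ Finset.range (m + 1),
      (if n ≤ m then ENNReal.ofReal (poissonP lam n) else 0) = 0 := by
    intro n hn
    rw [if_neg]
    simp only [Finset.mem_range] at hn
    omega
  rw [tsum_eq_sum hz, poissonCDF, ENNReal.ofReal_sum_of_nonneg fun i _ => poissonP_nonneg hlam i]
  apply Finset.sum_congr rfl
  intro i hi
  simp only [Finset.mem_range] at hi
  rw [if_pos (by omega : i ≤ m)]

end PPL

lemma measure_eq_of_le_of_count {μ₁ μ₂ : Measure ℝ} (hle : μ₁ ≤ μ₂)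
    (h1 : μ₁ Set.univ = μ₂ Set.univ) (hfin : μ₂ Set.univ ≠ ⊤) : μ₁ = μ₂ := by
  ext s hs
  have ha : μ₁ s ≤ μ₂ s := Measure.le_iff.1 hle s hs
  have hb : μ₁ sᶜ ≤ μ₂ sᶜ := Measure.le_iff.1 hle sᶜ hs.compl
  have e1 := measure_add_measure_compl (μ := μ₁) hs
  have e2 := measure_add_measure_compl (μ := μ₂) hs
  apply le_antisymm ha
  have hc : μ₂ sᶜ ≠ ⊤ := ne_top_of_le_ne_top hfin (measure_mono (Set.subset_univ _))
  have e3 : μ₂ s = μ₂ Set.univ - μ₂ sᶜ := by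
    rw [← e2]; exact (ENNReal.add_sub_cancel_right hc).symm
  rw [e3, ← h1, ← e1]
  calc μ₁ s + μ₁ sᶜ - μ₂ sᶜ ≤ μ₁ s + μ₂ sᶜ - μ₂ sᶜ := by gcongr
  _ = μ₁ s := ENNReal.add_sub_cancel_right hc

lemma ppl_null_bad (lam : ℝ) :
    poissonPPLaw (volume : Measure ℝ) lam (Set.Icc 0 1)
      {ν : Measure ℝ | ∀ n : ℕ, ν Set.univ ≠ (n : ℝ≥0∞)} = 0 := by
  have hmeas : MeasurableSet {ν : Measure ℝ | ∀ n : ℕ, ν Set.univ ≠ (n : ℝ≥0∞)} := by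
    have : {ν : Measure ℝ | ∀ n : ℕ, ν Set.univ ≠ (n : ℝ≥0∞)}
        = ⋂ n : ℕ, {ν : Measure ℝ | ν Set.univ = (n : ℝ≥0∞)}ᶜ := by
      ext ν; simp [Set.mem_iInter]
    rw [this]
    exact MeasurableSet.iInter fun n => (measurableSet_eqCount n).compl
  rw [ppl_eq, Measure.sum_apply _ hmeas]
  have : ∀ n : ℕ, (ENNReal.ofReal (poissonP lam n) •
      configLaw ((volume : Measure ℝ)[|Set.Icc 0 1]) n)
      {ν : Measure ℝ | ∀ n : ℕ, ν Set.univ ≠ (n : ℝ≥0∞)} = 0 := by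
    intro n
    have hd : ∀ ν ∈ {ν : Measure ℝ | ∀ m : ℕ, ν Set.univ ≠ (m : ℝ≥0∞)},
        ν Set.univ ≠ ((n : ℕ) : ℝ≥0∞) := fun ν hν => hν n
    rw [Measure.smul_apply, smul_eq_mul,
      configLaw_null_of_disjoint n _ hd, mul_zero]
  simp [this]

lemma no_thinning {lam mu : ℝ} (hmu : 0 < mu) (hlam : 0 ≤ lam) (k : ℕ)
    (h1 : poissonP mu (k + 1) < poissonP lam (k + 1))
    (h2 : poissonCDF mu k < poissonCDF lam (k + 1)) :
    ¬ ∃ f : Measure ℝ → Measure ℝ, IsThinning volume lam mu (Set.Icc (0:ℝ) 1) f := by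
  rintro ⟨f, hf, hmap, hae⟩
  set L := poissonPPLaw (volume : Measure ℝ) lam (Set.Icc 0 1) with hLdef
  set M := poissonPPLaw (volume : Measure ℝ) mu (Set.Icc 0 1) with hMdef
  set Q := configLaw ((volume : Measure ℝ)[|Set.Icc 0 1]) (k + 1) with hQdef
  have hQprob := configLaw_prob (k + 1)
  set E : Set (Measure ℝ) := {ν : Measure ℝ | ν Set.univ = ((k + 1 : ℕ) : ℝ≥0∞)} with hE
  have hEmeas : MeasurableSet E := measurableSet_eqCount (k + 1)
  set G : Set (Measure ℝ) := f ⁻¹' E ∩ E with hG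
  have hGmeas : MeasurableSet G := (hf hEmeas).inter hEmeas
  have hMapG : ∀ D : Set (Measure ℝ), MeasurableSet D → M D = L (f ⁻¹' D) := by
    intro D hD
    rw [← hmap, Measure.map_apply hf hD]
  -- a.e. on G, f acts as the identity
  have haeG : ∀ᵐ ν ∂L, ν ∈ G → ν ∈ f ⁻¹' G := by
    filter_upwards [hae] with ν hν hνG
    have hfeq : f ν = ν := by
      apply measure_eq_of_le_of_count hν
      · rw [hνG.2, hνG.1]
      · rw [hνG.2]; exact ENNReal.natCast_ne_top _
    simpa [Set.mem_preimage, hfeq] using hνG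
  have hGle : L G ≤ M G := by
    have hnull : L (G \ f ⁻¹' G) = 0 := by
      have hsub : G \ f ⁻¹' G ⊆ {ν | ¬ (ν ∈ G → ν ∈ f ⁻¹' G)} := by
        intro ν hν
        simp only [Set.mem_setOf_eq, Classical.not_imp]
        exact ⟨hν.1, hν.2⟩
      exact measure_mono_null hsub (ae_iff.1 haeG)
    calc L G ≤ L ((G ∩ f ⁻¹' G) ∪ (G \ f ⁻¹' G)) :=
          measure_mono (by intro ν hν; by_cases hc : ν ∈ f ⁻¹' G
                           · exact Or.inl ⟨hν, hc⟩
                           · exact Or.inr ⟨hν, hc⟩)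
    _ ≤ L (G ∩ f ⁻¹' G) + L (G \ f ⁻¹' G) := measure_union_le _ _
    _ = L (G ∩ f ⁻¹' G) := by rw [hnull, add_zero]
    _ ≤ L (f ⁻¹' G) := measure_mono Set.inter_subset_right
    _ = M G := (hMapG G hGmeas).symm
  have hLG : L G = ENNReal.ofReal (poissonP lam (k + 1)) * Q G :=
    ppl_apply_subset lam (k + 1) G hGmeas (fun ν hν => hν.2)
  have hMG : M G = ENNReal.ofReal (poissonP mu (k + 1)) * Q G :=
    ppl_apply_subset mu (k + 1) G hGmeas (fun ν hν => hν.2)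
  have hQG : Q G = 0 := by
    by_contra hne
    rw [hLG, hMG] at hGle
    have hmul := (ENNReal.mul_le_mul_iff_left hne (measure_ne_top Q G)).1 hGle
    have hple : poissonP lam (k + 1) ≤ poissonP mu (k + 1) :=
      (ENNReal.ofReal_le_ofReal_iff (poissonP_nonneg hmu.le _)).1 hmul
    linarith
  have hLGzero : L G = 0 := by rw [hLG, hQG, mul_zero]
  -- bad sets
  have hfbad : L (f ⁻¹' {ν : Measure ℝ | ∀ n : ℕ, ν Set.univ ≠ (n : ℝ≥0∞)}) = 0 := by
    rw [← hMapG _ (by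
      have : {ν : Measure ℝ | ∀ n : ℕ, ν Set.univ ≠ (n : ℝ≥0∞)}
          = ⋂ n : ℕ, {ν : Measure ℝ | ν Set.univ = (n : ℝ≥0∞)}ᶜ := by
        ext ν; simp [Set.mem_iInter]
      rw [this]
      exact MeasurableSet.iInter fun n => (measurableSet_eqCount n).compl)]
    exact ppl_null_bad mu
  -- main a.e. inclusion
  set A : Set (Measure ℝ) := {ν : Measure ℝ | ν Set.univ ≤ ((k + 1 : ℕ) : ℝ≥0∞)} with hA
  set B : Set (Measure ℝ) := {ν : Measure ℝ | ν Set.univ ≤ ((k : ℕ) : ℝ≥0∞)} with hB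
  have hmain : ∀ᵐ ν ∂L, ν ∈ A → ν ∈ f ⁻¹' B := by
    filter_upwards [hae, measure_eq_zero_iff_ae_notMem.1 hLGzero,
      measure_eq_zero_iff_ae_notMem.1 hfbad]
      with ν hle hGν hbadν hAν
    have hcnt : f ν Set.univ ≤ ν Set.univ := Measure.le_iff.1 hle _ MeasurableSet.univ
    simp only [Set.mem_preimage, Set.mem_setOf_eq, not_forall, not_not] at hbadν
    obtain ⟨n, hn⟩ := hbadν
    have hnle : (n : ℝ≥0∞) ≤ ((k + 1 : ℕ) : ℝ≥0∞) := by
      rw [← hn]; exact hcnt.trans hAν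
    have hnk : n ≤ k + 1 := by exact_mod_cast hnle
    rcases Nat.lt_or_ge n (k + 1) with hlt | hge
    · show f ν ∈ B
      rw [hB, Set.mem_setOf_eq, hn]
      exact_mod_cast Nat.cast_le.2 (by omega)
    · -- n = k + 1, so f ν ∈ E and ν ∈ E, contradiction with ν ∉ G
      exfalso
      have hn1 : n = k + 1 := le_antisymm hnk hge
      have hfE : f ν ∈ E := by rw [hE, Set.mem_setOf_eq, hn, hn1]
      have hνE : ν ∈ E := by
        rw [hE, Set.mem_setOf_eq]
        refine le_antisymm hAν ?_
        rw [← hn1, ← hn]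
        exact hcnt
      exact hGν ⟨hfE, hνE⟩
  have hfinal : L A ≤ M B := by
    have h1' : L A ≤ L (f ⁻¹' B) := by
      apply measure_mono_ae
      filter_upwards [hmain] with ν h using h
    rw [hMapG B (measurableSet_leCount k)]
    exact h1'
  rw [hLdef, hMdef, ppl_apply_leCount lam hlam (k + 1), ppl_apply_leCount mu hmu.le k] at hfinal
  have := (ENNReal.ofReal_le_ofReal_iff (poissonCDF_nonneg hmu.le k)).1 hfinal
  linarith

/-- for every `0 < δ < 1` there is `μ₀ > 0` such that for all `mu ≥ μ₀`,
with `lam = mu + δ`, there is an integer `k` with `P(X = k+1) > P(Y = k+1)` and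
`P(X ≤ k+1) > P(Y ≤ k)` for `X, Y` Poisson with means `lam` and `mu`; consequently
there is no thinning on `[0,1]` from `mu + δ` to `mu`. -/
theorem statement8 (δ : ℝ) (hδ0 : 0 < δ) (hδ1 : δ < 1) :
    ∃ μ₀ : ℝ, 0 < μ₀ ∧ ∀ mu : ℝ, μ₀ ≤ mu →
      (∃ k : ℕ, poissonP mu (k + 1) < poissonP (mu + δ) (k + 1) ∧
        poissonCDF mu k < poissonCDF (mu + δ) (k + 1)) ∧
      ¬ (∃ f : Measure ℝ → Measure ℝ,
        IsThinning volume (mu + δ) mu (Set.Icc (0:ℝ) 1) f) := by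
  refine ⟨max 2 (4 / (-Real.log δ)) + 1, by linarith [le_max_left 2 (4 / (-Real.log δ))], ?_⟩
  intro mu hmu
  have h2 : 2 ≤ mu := by linarith [le_max_left 2 (4 / (-Real.log δ))]
  have hbig : 4 / (-Real.log δ) < mu := by linarith [le_max_right 2 (4 / (-Real.log δ))]
  obtain ⟨k, hk1, hk2⟩ := exists_good_k δ mu hδ0 hδ1 h2 hbig
  exact ⟨⟨k, hk1, hk2⟩, no_thinning (by linarith) (by linarith) k hk1 hk2⟩
end

section
/- Let X and Y be Poisson random variables with respective means λ and μ, where λ > μ > 0. For every integer k ≥ 0, if P(X ≤ k+1) ≤ P(Y ≤ k) then P(X ≤ k+2) ≤ P(Y ≤ k+1). -/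
open MeasureTheory ProbabilityTheory
open scoped ENNReal

lemma poissonP_succ (lam : ℝ) (n : ℕ) :
    poissonP lam (n + 1) = poissonP lam n * (lam / (n + 1)) := by
  unfold poissonP
  rw [Nat.factorial_succ]
  have h1 : ((n + 1).factorial : ℝ) ≠ 0 := by positivity
  field_simp
  push_cast
  ring

lemma poissonP_summable (lam : ℝ) : Summable (fun n => poissonP lam n) := by
  unfold poissonP
  simpa [mul_div_assoc] using (Real.summable_pow_div_factorial lam).mul_left (Real.exp (-lam))

lemma poissonP_tsum (lam : ℝ) : ∑' n, poissonP lam n = 1 := by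
  unfold poissonP
  rw [tsum_congr (fun n => mul_div_assoc (Real.exp (-lam)) (lam ^ n) _), tsum_mul_left]
  have : ∑' n : ℕ, lam ^ n / n.factorial = Real.exp lam := by
    rw [Real.exp_eq_exp_ℝ, NormedSpace.exp_eq_tsum_div]
  rw [this, ← Real.exp_add]
  simp

lemma poissonCDF_tail (lam : ℝ) (n : ℕ) :
    poissonCDF lam n + ∑' i, poissonP lam (i + (n + 1)) = 1 := by
  rw [← poissonP_tsum lam]
  exact Summable.sum_add_tsum_nat_add (n + 1) (poissonP_summable lam)


/-- for Poisson `X, Y` with means `lam > mu > 0`, if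
`P(X ≤ k+1) ≤ P(Y ≤ k)` then `P(X ≤ k+2) ≤ P(Y ≤ k+1)`. -/
theorem statement14 (lam mu : ℝ) (hmu : 0 < mu) (hlm : mu < lam) (k : ℕ)
    (h : poissonCDF lam (k + 1) ≤ poissonCDF mu k) :
    poissonCDF lam (k + 2) ≤ poissonCDF mu (k + 1) := by
  have hlam : 0 < lam := hmu.trans hlm
  have hFl : poissonCDF lam (k + 2) = poissonCDF lam (k + 1) + poissonP lam (k + 2) :=
    Finset.sum_range_succ _ _
  have hFm : poissonCDF mu (k + 1) = poissonCDF mu k + poissonP mu (k + 1) :=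
    Finset.sum_range_succ _ _
  by_cases hkey : poissonP lam (k + 2) ≤ poissonP mu (k + 1)
  · rw [hFl, hFm]; exact add_le_add h hkey
  push_neg at hkey
  by_cases hq : mu * (k + 3) ≤ lam * (k + 2)
  · -- increasing phase: tail comparison
    have claim : ∀ j, poissonP mu (k + 1 + j) ≤ poissonP lam (k + 2 + j) := by
      intro j
      induction j with
      | zero => simpa using hkey.le
      | succ j ih =>
        have e1 : poissonP mu (k + 1 + (j + 1)) =
            poissonP mu (k + 1 + j) * (mu / (k + 1 + j + 1)) := by
          have := poissonP_succ mu (k + 1 + j)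
          rw [show k + 1 + (j + 1) = k + 1 + j + 1 from rfl, this]
          push_cast; ring_nf
        have e2 : poissonP lam (k + 2 + (j + 1)) =
            poissonP lam (k + 2 + j) * (lam / (k + 2 + j + 1)) := by
          have := poissonP_succ lam (k + 2 + j)
          rw [show k + 2 + (j + 1) = k + 2 + j + 1 from rfl, this]
          push_cast; ring_nf
        rw [e1, e2]
        have hd1 : (0:ℝ) < (k:ℝ) + 1 + j + 1 := by positivity
        have hd2 : (0:ℝ) < (k:ℝ) + 2 + j + 1 := by positivity
        have hfrac : mu / ((k:ℝ) + 1 + j + 1) ≤ lam / ((k:ℝ) + 2 + j + 1) := by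
          rw [div_le_div_iff₀ hd1 hd2]
          nlinarith
        push_cast
        refine mul_le_mul ih hfrac (by positivity) (poissonP_pos hlam _).le
    have hsumm : Summable (fun i => poissonP mu (i + (k + 2))) :=
      (summable_nat_add_iff (k + 2)).2 (poissonP_summable mu)
    have hsuml : Summable (fun i => poissonP lam (i + (k + 3))) :=
      (summable_nat_add_iff (k + 3)).2 (poissonP_summable lam)
    have htail : (∑' i, poissonP mu (i + (k + 2))) ≤ ∑' i, poissonP lam (i + (k + 3)) := by
      refine Summable.tsum_le_tsum (fun i => ?_) hsumm hsuml
      simpa [show i + (k + 2) = k + 1 + (i + 1) by omega,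
        show i + (k + 3) = k + 2 + (i + 1) by omega] using claim (i + 1)
    have t1 := poissonCDF_tail lam (k + 2)
    have t2 := poissonCDF_tail mu (k + 1)
    have e1 : (k + 2) + 1 = k + 3 := rfl
    have e2 : (k + 1) + 1 = k + 2 := rfl
    rw [e1] at t1; rw [e2] at t2
    linarith
  · -- decreasing phase: contradiction with h
    push_neg at hq
    exfalso
    have claim : ∀ j ≤ k, poissonP mu j ≤ poissonP lam (j + 1) := by
      by_contra hc
      push_neg at hc
      obtain ⟨j₀, hj₀k, hj₀⟩ := hc
      have step : ∀ m, j₀ ≤ m → (m ≤ k + 1 → poissonP lam (m + 1) < poissonP mu m) := by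
        intro m hm
        induction m, hm using Nat.le_induction with
        | base => intro _; exact hj₀
        | succ m hm ih =>
          intro hmk
          have hmk' : m ≤ k + 1 := by omega
          have ihm := ih hmk'
          have e1 : poissonP lam (m + 1 + 1) =
              poissonP lam (m + 1) * (lam / (m + 1 + 1)) := by
            have := poissonP_succ lam (m + 1)
            rw [this]; push_cast; ring_nf
          have e2 : poissonP mu (m + 1) = poissonP mu m * (mu / (m + 1)) := poissonP_succ mu m
          rw [e1, e2]
          have hd1 : (0:ℝ) < (m:ℝ) + 1 + 1 := by positivity
          have hd2 : (0:ℝ) < (m:ℝ) + 1 := by positivity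
          have hcast : (m:ℝ) + 1 ≤ (k:ℝ) + 1 := by exact_mod_cast Nat.cast_le.2 hmk
          have hfrac : lam / ((m:ℝ) + 1 + 1) ≤ mu / ((m:ℝ) + 1) := by
            rw [div_le_div_iff₀ hd1 hd2]
            nlinarith
          push_cast
          calc poissonP lam (m + 1) * (lam / ((m:ℝ) + 1 + 1))
              ≤ poissonP lam (m + 1) * (mu / ((m:ℝ) + 1)) := by
                refine mul_le_mul_of_nonneg_left hfrac (poissonP_pos hlam _).le
            _ < poissonP mu m * (mu / ((m:ℝ) + 1)) := by
                refine mul_lt_mul_of_pos_right ihm (by positivity)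
      have := step (k + 1) (by omega) le_rfl
      exact absurd hkey (not_lt.2 this.le)
    have hsum : poissonCDF mu k ≤ ∑ j ∈ Finset.range (k + 1), poissonP lam (j + 1) := by
      refine Finset.sum_le_sum (fun j hj => ?_)
      exact claim j (by simpa [Nat.lt_succ_iff] using Finset.mem_range.1 hj)
    have hsplit : poissonCDF lam (k + 1) =
        ∑ j ∈ Finset.range (k + 1), poissonP lam (j + 1) + poissonP lam 0 := by
      unfold poissonCDF
      exact Finset.sum_range_succ' _ _
    have hp0 : 0 < poissonP lam 0 := poissonP_pos hlam 0
    linarith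
end

section
/- Let X and Y be Poisson random variables with respective means λ and μ where λ > μ > 0, and suppose there exists an integer k ≥ 0 such that P(X = k) ≤ P(Y = k) and P(X ≤ k+1) ≤ P(Y ≤ k). Then there exists a coupling of X and Y (a probability measure on ℕ × ℕ whose first marginal is the law of X and whose second marginal is the law of Y) under which almost surely: X ≥ Y; if X ≤ k then X = Y; and if X > k then X > Y. -/
open MeasureTheory ProbabilityTheory
open scoped ENNReal

/-- The law of a Poisson random variable with mean `lam`, as a measure on `ℕ`. -/
noncomputable def poissonMeasure (lam : ℝ) : Measure ℕ :=
  Measure.sum fun n : ℕ => ENNReal.ofReal (poissonP lam n) • Measure.dirac n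

namespace S16

open Filter

lemma pP_pos {l : ℝ} (hl : 0 < l) (n : ℕ) : 0 < poissonP l n := by
  unfold poissonP
  have : (0:ℝ) < n.factorial := by positivity
  positivity

lemma pP_nonneg {l : ℝ} (hl : 0 ≤ l) (n : ℕ) : 0 ≤ poissonP l n := by
  unfold poissonP
  positivity

lemma hasSum_pP {l : ℝ} (hl : 0 ≤ l) : HasSum (poissonP l) 1 := by
  have h := ProbabilityTheory.poissonPMFRealSum l.toNNReal
  have he : poissonP l = ProbabilityTheory.poissonPMFReal l.toNNReal := by
    funext n
    unfold poissonP ProbabilityTheory.poissonPMFReal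
    rw [Real.coe_toNNReal _ hl]
  rw [he]; exact h

lemma summable_pP {l : ℝ} (hl : 0 ≤ l) : Summable (poissonP l) := (hasSum_pP hl).summable

lemma cdf_succ (l : ℝ) (n : ℕ) : poissonCDF l (n + 1) = poissonCDF l n + poissonP l (n + 1) := by
  unfold poissonCDF; rw [Finset.sum_range_succ]

lemma cdf_nonneg {l : ℝ} (hl : 0 ≤ l) (n : ℕ) : 0 ≤ poissonCDF l n :=
  Finset.sum_nonneg fun i _ => pP_nonneg hl i

lemma cdf_mono {l : ℝ} (hl : 0 ≤ l) : Monotone (poissonCDF l) := by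
  apply monotone_nat_of_le_succ
  intro n; rw [cdf_succ]; linarith [pP_nonneg hl (n + 1)]

lemma cdf_tail {l : ℝ} (hl : 0 ≤ l) (n : ℕ) :
    poissonCDF l n + ∑' i, poissonP l (i + (n + 1)) = 1 := by
  have h := Summable.sum_add_tsum_nat_add (f := poissonP l) (n + 1) (summable_pP hl)
  rw [(hasSum_pP hl).tsum_eq] at h
  exact h

lemma summable_pP_shift {l : ℝ} (hl : 0 ≤ l) (n : ℕ) :
    Summable fun i => poissonP l (i + n) :=
  (summable_nat_add_iff n).mpr (summable_pP hl)

lemma cdf_lt_one {l : ℝ} (hl : 0 < l) (n : ℕ) : poissonCDF l n < 1 := by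
  have h := cdf_tail hl.le n
  have h2 : poissonP l (0 + (n + 1)) ≤ ∑' i, poissonP l (i + (n + 1)) :=
    Summable.le_tsum (summable_pP_shift hl.le (n + 1)) 0 fun j _ => pP_nonneg hl.le _
  have h3 := pP_pos hl (0 + (n + 1))
  linarith

lemma cdf_tendsto {l : ℝ} (hl : 0 ≤ l) : Tendsto (poissonCDF l) atTop (nhds 1) := by
  have h := (hasSum_pP hl).tendsto_sum_nat
  have := h.comp (tendsto_add_atTop_nat 1)
  exact this

lemma pow_cross {a b : ℝ} (h0 : 0 < b) (hab : b ≤ a) {n m : ℕ} (hnm : n ≤ m) :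
    a ^ n * b ^ m ≤ b ^ n * a ^ m := by
  obtain ⟨d, rfl⟩ := Nat.exists_eq_add_of_le hnm
  have ha : 0 < a := lt_of_lt_of_le h0 hab
  have hbd : b ^ d ≤ a ^ d := pow_le_pow_left₀ h0.le hab d
  have h1 : (0:ℝ) ≤ a ^ n * b ^ n := by positivity
  calc a ^ n * b ^ (n + d) = a ^ n * b ^ n * b ^ d := by rw [pow_add]; ring
    _ ≤ a ^ n * b ^ n * a ^ d := mul_le_mul_of_nonneg_left hbd h1
    _ = b ^ n * a ^ (n + d) := by rw [pow_add]; ring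

lemma pP_le_of_le {lam mu : ℝ} (hmu : 0 < mu) (hlm : mu < lam) {k : ℕ}
    (h1 : poissonP lam k ≤ poissonP mu k) {n : ℕ} (hn : n ≤ k) :
    poissonP lam n ≤ poissonP mu n := by
  have hl : 0 < lam := hmu.trans hlm
  have e1 : (0:ℝ) < Real.exp (-lam) := Real.exp_pos _
  have e2 : (0:ℝ) < Real.exp (-mu) := Real.exp_pos _
  have fn : (0:ℝ) < n.factorial := by positivity
  have fk : (0:ℝ) < k.factorial := by positivity
  have hp : lam ^ n * mu ^ k ≤ mu ^ n * lam ^ k := pow_cross hmu hlm.le hn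
  have hk' : Real.exp (-lam) * lam ^ k ≤ Real.exp (-mu) * mu ^ k := by
    unfold poissonP at h1
    rw [div_le_div_iff_of_pos_right fk] at h1
    exact h1
  have goal' : Real.exp (-lam) * lam ^ n ≤ Real.exp (-mu) * mu ^ n := by
    have h3 : Real.exp (-lam) * (lam ^ n * mu ^ k) ≤ Real.exp (-lam) * (mu ^ n * lam ^ k) :=
      mul_le_mul_of_nonneg_left hp e1.le
    have h4 : mu ^ n * (Real.exp (-lam) * lam ^ k) ≤ mu ^ n * (Real.exp (-mu) * mu ^ k) :=
      mul_le_mul_of_nonneg_left hk' (by positivity)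
    have h6 : Real.exp (-lam) * lam ^ n * mu ^ k ≤ Real.exp (-mu) * mu ^ n * mu ^ k := by
      nlinarith [h3, h4]
    exact le_of_mul_le_mul_right h6 (by positivity)
  unfold poissonP
  rw [div_le_div_iff_of_pos_right fn]
  exact goal'

lemma pP_succ (l : ℝ) (n : ℕ) : poissonP l (n + 1) = poissonP l n * (l / (n + 1)) := by
  unfold poissonP
  rw [Nat.factorial_succ]
  have h1 : ((n:ℝ) + 1) ≠ 0 := by positivity
  have h2 : ((n.factorial : ℝ)) ≠ 0 := Nat.cast_ne_zero.mpr n.factorial_ne_zero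
  push_cast
  field_simp
  ring

lemma log_pP_succ {l : ℝ} (hl : 0 < l) (n : ℕ) :
    Real.log (poissonP l (n + 1)) = Real.log (poissonP l n) + (Real.log l - Real.log (n + 1)) := by
  rw [pP_succ, Real.log_mul (pP_pos hl n).ne' (by positivity),
    Real.log_div hl.ne' (by positivity)]

/-- The log-ratio `log (p_lam (i+1) / p_mu i)`. -/
noncomputable def LL (lam mu : ℝ) (i : ℕ) : ℝ :=
  Real.log (poissonP lam (i + 1)) - Real.log (poissonP mu i)

lemma LL_pos_iff {lam mu : ℝ} (hl : 0 < lam) (hm : 0 < mu) (i : ℕ) :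
    0 < LL lam mu i ↔ poissonP mu i < poissonP lam (i + 1) := by
  unfold LL
  rw [sub_pos, Real.log_lt_log_iff (pP_pos hm i) (pP_pos hl (i + 1))]

/-- The increment of the log-ratio. -/
noncomputable def DD (lam mu : ℝ) (i : ℕ) : ℝ :=
  (Real.log lam - Real.log (i + 2)) - (Real.log mu - Real.log (i + 1))

lemma LL_step {lam mu : ℝ} (hl : 0 < lam) (hm : 0 < mu) (i : ℕ) :
    LL lam mu (i + 1) = LL lam mu i + DD lam mu i := by
  unfold LL DD
  rw [log_pP_succ hl (i + 1), log_pP_succ hm i]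
  push_cast
  ring

lemma DD_mono {lam mu : ℝ} : Monotone (DD lam mu) := by
  apply monotone_nat_of_le_succ
  intro i
  unfold DD
  have key : Real.log ((i:ℝ) + 1) + Real.log ((i:ℝ) + 3) ≤ 2 * Real.log ((i:ℝ) + 2) := by
    have h1 : ((i:ℝ) + 1) * ((i:ℝ) + 3) ≤ ((i:ℝ) + 2) ^ 2 := by nlinarith
    have h2 : Real.log (((i:ℝ) + 1) * ((i:ℝ) + 3)) ≤ Real.log (((i:ℝ) + 2) ^ 2) :=
      Real.log_le_log (by positivity) h1
    rw [Real.log_mul (by positivity) (by positivity), Real.log_pow] at h2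
    push_cast at h2
    linarith
  have e1 : ((i:ℝ) + 1 + 1) = (i:ℝ) + 2 := by ring
  have e2 : ((i:ℝ) + 1 + 2) = (i:ℝ) + 3 := by ring
  push_cast
  rw [e1, e2]
  linarith

lemma chain_mono (Lf : ℕ → ℝ) :
    ∀ b a : ℕ, a ≤ b → (∀ t, a ≤ t → t < b → Lf t ≤ Lf (t + 1)) → Lf a ≤ Lf b := by
  intro b
  induction b with
  | zero => intro a ha _; interval_cases a; rfl
  | succ n ih =>
    intro a ha h
    rcases Nat.lt_or_ge a (n + 1) with h' | h'
    · have hab : a ≤ n := Nat.lt_succ_iff.mp h'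
      have := ih a hab fun t ht ht' => h t ht (Nat.lt_succ_of_lt ht')
      have h2 := h n hab (Nat.lt_succ_self n)
      linarith
    · have : a = n + 1 := le_antisymm ha h'
      rw [this]

/-- If all `p_mu i < p_lam (i+1)` for `i ≤ k`, contradiction with `h2`. -/
lemma all_LL_contra {lam mu : ℝ} (hmu : 0 < mu) (hlm : mu < lam) {k : ℕ}
    (h2 : poissonCDF lam (k + 1) ≤ poissonCDF mu k)
    (hall : ∀ i, i ≤ k → poissonP mu i < poissonP lam (i + 1)) : False := by
  have hl : 0 < lam := hmu.trans hlm
  have hlt : poissonCDF mu k < ∑ i ∈ Finset.range (k + 1), poissonP lam (i + 1) := by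
    apply Finset.sum_lt_sum_of_nonempty ⟨0, Finset.mem_range.mpr (Nat.succ_pos k)⟩
    intro i hi
    exact hall i (Nat.lt_succ_iff.mp (Finset.mem_range.mp hi))
  have he : poissonCDF lam (k + 1) =
      ∑ i ∈ Finset.range (k + 1), poissonP lam (i + 1) + poissonP lam 0 := by
    unfold poissonCDF
    exact Finset.sum_range_succ' (poissonP lam) (k + 1)
  have h0 : 0 < poissonP lam 0 := pP_pos hl 0
  linarith [h2, hlt, he, h0]

/-- Main inequality: `F_lam (j+1) ≤ F_mu j` for all `j ≥ k`. -/
lemma key_cdf {lam mu : ℝ} (hmu : 0 < mu) (hlm : mu < lam) {k : ℕ}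
    (h1 : poissonP lam k ≤ poissonP mu k)
    (h2 : poissonCDF lam (k + 1) ≤ poissonCDF mu k) :
    ∀ j, k ≤ j → poissonCDF lam (j + 1) ≤ poissonCDF mu j := by
  have hl : 0 < lam := hmu.trans hlm
  intro j hj
  induction j, hj using Nat.le_induction with
  | base => exact h2
  | succ j hj ih =>
    by_cases hc : poissonP lam (j + 2) ≤ poissonP mu (j + 1)
    · rw [cdf_succ lam (j + 1), cdf_succ mu j]
      linarith
    · push_neg at hc
      -- hc : p_mu (j+1) < p_lam (j+2), i.e. 0 < LL (j+1)
      have hLL1 : 0 < LL lam mu (j + 1) := (LL_pos_iff hl hmu (j + 1)).mpr hc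
      by_cases hall : ∀ i, j + 1 ≤ i → poissonP mu i < poissonP lam (i + 1)
      · -- tail argument
        have t1 := cdf_tail hl.le (j + 2)
        have t2 := cdf_tail hmu.le (j + 1)
        have hle : ∑' i, poissonP mu (i + (j + 2)) ≤ ∑' i, poissonP lam (i + (j + 3)) := by
          apply Summable.tsum_le_tsum _ (summable_pP_shift hmu.le (j + 2)) (summable_pP_shift hl.le (j + 3))
          intro i
          have := (hall (i + (j + 2)) (by omega)).le
          have he : i + (j + 2) + 1 = i + (j + 3) := by omega
          rwa [he] at this
        linarith
      · push_neg at hall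
        obtain ⟨i2, hi2, hle2⟩ := hall
        have hLL2 : LL lam mu i2 ≤ 0 := by
          by_contra hcon
          push_neg at hcon
          exact absurd ((LL_pos_iff hl hmu i2).mp hcon) (not_lt.mpr hle2)
        have hne : j + 1 < i2 := by
          rcases Nat.lt_or_ge (j + 1) i2 with h | h
          · exact h
          · have : i2 = j + 1 := le_antisymm h hi2
            rw [this] at hLL2; linarith
        -- derive: ∀ i ≤ k, p_mu i < p_lam (i+1), contradiction
        exfalso
        apply all_LL_contra hmu hlm h2
        intro i hi
        rw [← LL_pos_iff hl hmu i]
        by_contra hni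
        push_neg at hni
        -- hni : LL i ≤ 0; hLL1 : 0 < LL (j+1); i ≤ k ≤ j < j+1
        -- exists s in [i, j+1) with LL s < LL (s+1)
        have hstep : ¬ (∀ t, i ≤ t → t < j + 1 → LL lam mu t ≥ LL lam mu (t + 1)) := by
          intro hmon
          have : LL lam mu (j + 1) ≤ LL lam mu i := by
            have := chain_mono (fun t => - LL lam mu t) (j + 1) i (by omega)
              (fun t ht ht' => by simpa using hmon t ht ht')
            simpa using this
          linarith
        push_neg at hstep
        obtain ⟨s, hs1, hs2, hs3⟩ := hstep
        -- DD s > 0, DD monotone, so LL increasing from s on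
        have hDDs : 0 < DD lam mu s := by
          have := LL_step hl hmu s
          linarith
        have hLLmono : LL lam mu (j + 1) ≤ LL lam mu i2 := by
          apply chain_mono (LL lam mu) i2 (j + 1) hne.le
          intro t ht _
          have hDDt : 0 ≤ DD lam mu t := le_trans hDDs.le (DD_mono (by omega))
          have := LL_step hl hmu t
          linarith
        linarith
/-! ### Construction of the coupling -/

/-- Target pmf of the second coordinate on the region `X > k`. -/
noncomputable def qf (lam mu : ℝ) (k : ℕ) (i : ℕ) : ℝ :=
  poissonP mu i - if i ≤ k then poissonP lam i else 0

/-- Cumulative thresholds for the second coordinate above `F_lam k`. -/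
noncomputable def Phi (lam mu : ℝ) (k : ℕ) (m : ℕ) : ℝ :=
  poissonCDF lam k + ∑ i ∈ Finset.range (m + 1), qf lam mu k i

/-- Quantile function for the Poisson law. -/
noncomputable def fq (lam : ℝ) (u : ℝ) : ℕ := sInf {n | u < poissonCDF lam n}

/-- Quantile function for the second-coordinate law above `F_lam k`. -/
noncomputable def f2q (lam mu : ℝ) (k : ℕ) (u : ℝ) : ℕ := sInf {m | u < Phi lam mu k m}

/-- The second coordinate of the coupling. -/
noncomputable def gq (lam mu : ℝ) (k : ℕ) (u : ℝ) : ℕ :=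
  if u < poissonCDF lam k then fq lam u else f2q lam mu k u

section Construction

variable {lam mu : ℝ} {k : ℕ}

lemma qf_nonneg (hmu : 0 < mu) (hlm : mu < lam)
    (h1 : poissonP lam k ≤ poissonP mu k) (i : ℕ) : 0 ≤ qf lam mu k i := by
  unfold qf
  split
  · rename_i h
    linarith [pP_le_of_le hmu hlm h1 h]
  · linarith [pP_nonneg hmu.le i]

lemma Phi_succ (i : ℕ) : Phi lam mu k (i + 1) = Phi lam mu k i + qf lam mu k (i + 1) := by
  unfold Phi
  rw [Finset.sum_range_succ]
  ring

lemma Phi_mono (hmu : 0 < mu) (hlm : mu < lam)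
    (h1 : poissonP lam k ≤ poissonP mu k) : Monotone (Phi lam mu k) := by
  apply monotone_nat_of_le_succ
  intro m
  rw [Phi_succ]
  linarith [qf_nonneg hmu hlm h1 (m + 1)]

lemma ite_sum (f : ℕ → ℝ) (m : ℕ) :
    ∑ i ∈ Finset.range (m + 1), (if i ≤ k then f i else 0) =
      ∑ i ∈ Finset.range (min m k + 1), f i := by
  have hfil : Finset.filter (fun i => i ≤ k) (Finset.range (m + 1)) =
      Finset.range (min m k + 1) := by
    ext i
    simp only [Finset.mem_filter, Finset.mem_range]
    omega
  rw [← Finset.sum_filter, hfil]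

lemma Phi_eq (m : ℕ) : Phi lam mu k m =
    poissonCDF mu m + (poissonCDF lam k - poissonCDF lam (min m k)) := by
  unfold Phi qf
  rw [Finset.sum_sub_distrib, ite_sum]
  unfold poissonCDF
  ring

lemma Phi_ge (hmu : 0 < mu) (hlm : mu < lam)
    (h1 : poissonP lam k ≤ poissonP mu k) (m : ℕ) : poissonCDF lam k ≤ Phi lam mu k m := by
  unfold Phi
  have : 0 ≤ ∑ i ∈ Finset.range (m + 1), qf lam mu k i :=
    Finset.sum_nonneg fun i _ => qf_nonneg hmu hlm h1 i
  linarith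

lemma Phi_lt_one (hmu : 0 < mu) (hlm : mu < lam)
    (h1 : poissonP lam k ≤ poissonP mu k) (m : ℕ) : Phi lam mu k m < 1 := by
  have h := Phi_mono hmu hlm h1 (le_max_left m k)
  have he : Phi lam mu k (max m k) = poissonCDF mu (max m k) := by
    rw [Phi_eq, min_eq_right (le_max_right m k), sub_self, add_zero]
  have := cdf_lt_one hmu (max m k)
  linarith

lemma cdf_le_cdf (hmu : 0 < mu) (hlm : mu < lam)
    (h1 : poissonP lam k ≤ poissonP mu k) {m : ℕ} (hm : m ≤ k) :
    poissonCDF lam m ≤ poissonCDF mu m := by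
  unfold poissonCDF
  apply Finset.sum_le_sum
  intro i hi
  exact pP_le_of_le hmu hlm h1 (le_trans (Nat.lt_succ_iff.mp (Finset.mem_range.mp hi)) hm)

/-- Key inequality: `F_lam (m+1) ≤ Phi m`. -/
lemma Phi_ge_cdf (hmu : 0 < mu) (hlm : mu < lam)
    (h1 : poissonP lam k ≤ poissonP mu k)
    (h2 : poissonCDF lam (k + 1) ≤ poissonCDF mu k) (m : ℕ) :
    poissonCDF lam (m + 1) ≤ Phi lam mu k m := by
  have hl : 0 < lam := hmu.trans hlm
  rcases le_or_gt k m with h | h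
  · rw [Phi_eq, min_eq_right h, sub_self, add_zero]
    exact key_cdf hmu hlm h1 h2 m h
  · rw [Phi_eq, min_eq_left h.le]
    have hd : poissonCDF lam m ≤ poissonCDF mu m := cdf_le_cdf hmu hlm h1 h.le
    have hc : poissonCDF lam (m + 1) ≤ poissonCDF lam k := cdf_mono hl.le (by omega)
    linarith

variable (hmu : 0 < mu) (hlm : mu < lam)

/-! #### Quantile function facts -/

lemma fq_nonempty (hl : 0 < lam) {u : ℝ} (hu : u < 1) :
    {n | u < poissonCDF lam n}.Nonempty :=
  ((cdf_tendsto hl.le).eventually_const_lt hu).exists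

lemma fq_lt (hl : 0 < lam) {u : ℝ} (hu : u < 1) : u < poissonCDF lam (fq lam u) :=
  Nat.sInf_mem (fq_nonempty hl hu)

lemma fq_le_iff (hl : 0 < lam) {u : ℝ} (hu : u < 1) {n : ℕ} :
    fq lam u ≤ n ↔ u < poissonCDF lam n := by
  constructor
  · intro h
    exact lt_of_lt_of_le (fq_lt hl hu) (cdf_mono hl.le h)
  · intro h
    exact Nat.sInf_le h

/-- Global preimage of `fq` at `0`. -/
lemma fq_preim_zero (hl : 0 < lam) :
    fq lam ⁻¹' {0} = Set.Iio (poissonCDF lam 0) ∪ Set.Ici 1 := by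
  ext u
  simp only [Set.mem_preimage, Set.mem_singleton_iff, Set.mem_union, Set.mem_Iio, Set.mem_Ici]
  constructor
  · intro h
    rcases lt_or_ge u 1 with hu | hu
    · left
      have := fq_lt hl hu
      rwa [h] at this
    · right; exact hu
  · intro h
    rcases h with h | h
    · exact Nat.le_zero.mp (Nat.sInf_le h)
    · have : {n | u < poissonCDF lam n} = ∅ := by
        ext n
        simp only [Set.mem_setOf_eq, Set.mem_empty_iff_false, iff_false, not_lt]
        exact le_trans (cdf_lt_one hl n).le h
      unfold fq
      rw [this]
      exact Nat.sInf_empty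

/-- Global preimage of `fq` at `n+1`. -/
lemma fq_preim_succ (hl : 0 < lam) (n : ℕ) :
    fq lam ⁻¹' {n + 1} = Set.Ico (poissonCDF lam n) (poissonCDF lam (n + 1)) := by
  ext u
  simp only [Set.mem_preimage, Set.mem_singleton_iff, Set.mem_Ico]
  constructor
  · intro h
    have hne : {m | u < poissonCDF lam m}.Nonempty := by
      by_contra hc
      rw [Set.not_nonempty_iff_eq_empty] at hc
      unfold fq at h
      rw [hc, Nat.sInf_empty] at h
      omega
    have hmem : u < poissonCDF lam (n + 1) := by
      have := Nat.sInf_mem hne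
      rwa [show sInf {m | u < poissonCDF lam m} = n + 1 from h] at this
    have hlt : n < sInf {m | u < poissonCDF lam m} := by unfold fq at h; omega
    have hnot : ¬ u < poissonCDF lam n := Nat.notMem_of_lt_sInf hlt
    exact ⟨not_lt.mp hnot, hmem⟩
  · intro ⟨h1', h2'⟩
    have hu : u < 1 := lt_of_lt_of_le h2' (cdf_lt_one hl (n + 1)).le
    have hle : fq lam u ≤ n + 1 := Nat.sInf_le h2'
    have hgt : n < fq lam u := by
      by_contra hc
      push_neg at hc
      have := (fq_le_iff hl hu).mp hc
      linarith
    omega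

lemma fq_measurable (hl : 0 < lam) : Measurable (fq lam) := by
  apply measurable_to_countable'
  intro n
  cases n with
  | zero => rw [fq_preim_zero hl]; exact measurableSet_Iio.union measurableSet_Ici
  | succ n => rw [fq_preim_succ hl n]; exact measurableSet_Ico

/-! same for f2q -/

lemma f2q_nonempty (hmu : 0 < mu) (hlm : mu < lam)
    (h1 : poissonP lam k ≤ poissonP mu k) {u : ℝ} (hu : u < 1) :
    {m | u < Phi lam mu k m}.Nonempty := by
  obtain ⟨m, hm⟩ := ((cdf_tendsto hmu.le).eventually_const_lt hu).exists
  refine ⟨max m k, ?_⟩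
  have he : Phi lam mu k (max m k) = poissonCDF mu (max m k) := by
    rw [Phi_eq, min_eq_right (le_max_right m k), sub_self, add_zero]
  have := cdf_mono hmu.le (le_max_left m k)
  simp only [Set.mem_setOf_eq]
  rw [he]
  linarith

lemma f2q_preim_zero (hmu : 0 < mu) (hlm : mu < lam)
    (h1 : poissonP lam k ≤ poissonP mu k) :
    f2q lam mu k ⁻¹' {0} = Set.Iio (Phi lam mu k 0) ∪ Set.Ici 1 := by
  ext u
  simp only [Set.mem_preimage, Set.mem_singleton_iff, Set.mem_union, Set.mem_Iio, Set.mem_Ici]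
  constructor
  · intro h
    rcases lt_or_ge u 1 with hu | hu
    · left
      have := Nat.sInf_mem (f2q_nonempty hmu hlm h1 hu)
      rw [show sInf {m | u < Phi lam mu k m} = 0 from h] at this
      exact this
    · right; exact hu
  · intro h
    rcases h with h | h
    · exact Nat.le_zero.mp (Nat.sInf_le h)
    · have : {m | u < Phi lam mu k m} = ∅ := by
        ext m
        simp only [Set.mem_setOf_eq, Set.mem_empty_iff_false, iff_false, not_lt]
        exact le_trans (Phi_lt_one hmu hlm h1 m).le h
      unfold f2q
      rw [this]
      exact Nat.sInf_empty

lemma f2q_preim_succ (hmu : 0 < mu) (hlm : mu < lam)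
    (h1 : poissonP lam k ≤ poissonP mu k) (n : ℕ) :
    f2q lam mu k ⁻¹' {n + 1} = Set.Ico (Phi lam mu k n) (Phi lam mu k (n + 1)) := by
  ext u
  simp only [Set.mem_preimage, Set.mem_singleton_iff, Set.mem_Ico]
  constructor
  · intro h
    have hne : {m | u < Phi lam mu k m}.Nonempty := by
      by_contra hc
      rw [Set.not_nonempty_iff_eq_empty] at hc
      unfold f2q at h
      rw [hc, Nat.sInf_empty] at h
      omega
    have hmem : u < Phi lam mu k (n + 1) := by
      have := Nat.sInf_mem hne
      rwa [show sInf {m | u < Phi lam mu k m} = n + 1 from h] at this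
    have hlt : n < sInf {m | u < Phi lam mu k m} := by unfold f2q at h; omega
    have hnot : ¬ u < Phi lam mu k n := Nat.notMem_of_lt_sInf hlt
    exact ⟨not_lt.mp hnot, hmem⟩
  · intro ⟨ha, hb⟩
    have hu : u < 1 := lt_of_lt_of_le hb (Phi_lt_one hmu hlm h1 (n + 1)).le
    have hle : f2q lam mu k u ≤ n + 1 := Nat.sInf_le hb
    have hgt : n < f2q lam mu k u := by
      by_contra hc
      push_neg at hc
      have hmem : u < Phi lam mu k (f2q lam mu k u) := Nat.sInf_mem (f2q_nonempty hmu hlm h1 hu)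
      have := lt_of_lt_of_le hmem (Phi_mono hmu hlm h1 hc)
      linarith
    omega

lemma f2q_measurable (hmu : 0 < mu) (hlm : mu < lam)
    (h1 : poissonP lam k ≤ poissonP mu k) : Measurable (f2q lam mu k) := by
  apply measurable_to_countable'
  intro n
  cases n with
  | zero => rw [f2q_preim_zero hmu hlm h1]; exact measurableSet_Iio.union measurableSet_Ici
  | succ n => rw [f2q_preim_succ hmu hlm h1 n]; exact measurableSet_Ico

lemma gq_measurable (hmu : 0 < mu) (hlm : mu < lam)
    (h1 : poissonP lam k ≤ poissonP mu k) : Measurable (gq lam mu k) := by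
  unfold gq
  exact Measurable.ite measurableSet_Iio (fq_measurable (hmu.trans hlm)) (f2q_measurable hmu hlm h1)

end Construction


section Marginals

variable {lam mu : ℝ} {k : ℕ}

lemma gq_preim (m : ℕ) : gq lam mu k ⁻¹' {m} =
    (Set.Iio (poissonCDF lam k) ∩ fq lam ⁻¹' {m}) ∪
      (Set.Ici (poissonCDF lam k) ∩ f2q lam mu k ⁻¹' {m}) := by
  ext u
  simp only [Set.mem_preimage, Set.mem_singleton_iff, Set.mem_union, Set.mem_inter_iff,
    Set.mem_Iio, Set.mem_Ici]
  by_cases hc : u < poissonCDF lam k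
  · rw [gq, if_pos hc]
    constructor
    · intro h; exact Or.inl ⟨hc, h⟩
    · rintro (⟨_, h⟩ | ⟨h, _⟩)
      · exact h
      · exact absurd hc (not_lt.mpr h)
  · rw [gq, if_neg hc]
    constructor
    · intro h; exact Or.inr ⟨not_lt.mp hc, h⟩
    · rintro (⟨h, _⟩ | ⟨_, h⟩)
      · exact absurd h hc
      · exact h

lemma pieceA (hmu : 0 < mu) (hlm : mu < lam) (m : ℕ) :
    volume ((Set.Iio (poissonCDF lam k) ∩ fq lam ⁻¹' {m}) ∩ Set.Ico (0:ℝ) 1) =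
      ENNReal.ofReal (if m ≤ k then poissonP lam m else 0) := by
  have hl : 0 < lam := hmu.trans hlm
  cases m with
  | zero =>
    rw [if_pos (Nat.zero_le k), fq_preim_zero hl]
    have hset : (Set.Iio (poissonCDF lam k) ∩ (Set.Iio (poissonCDF lam 0) ∪ Set.Ici 1)) ∩
        Set.Ico (0:ℝ) 1 = Set.Ico 0 (poissonCDF lam 0) := by
      ext u
      simp only [Set.mem_inter_iff, Set.mem_Iio, Set.mem_union, Set.mem_Ici, Set.mem_Ico]
      constructor
      · rintro ⟨⟨hck, h0 | h0⟩, hu0, hu1⟩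
        · exact ⟨hu0, h0⟩
        · linarith
      · intro ⟨hu0, hu⟩
        have h0k : poissonCDF lam 0 ≤ poissonCDF lam k := cdf_mono hl.le (Nat.zero_le k)
        have := cdf_lt_one hl k
        exact ⟨⟨lt_of_lt_of_le hu h0k, Or.inl hu⟩, hu0, by linarith⟩
    rw [hset, Real.volume_Ico, sub_zero]
    congr 1
    unfold poissonCDF
    rw [Finset.sum_range_one]
  | succ n =>
    rw [fq_preim_succ hl]
    have hset : (Set.Iio (poissonCDF lam k) ∩
        Set.Ico (poissonCDF lam n) (poissonCDF lam (n + 1))) ∩ Set.Ico (0:ℝ) 1 =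
        Set.Ico (poissonCDF lam n) (min (poissonCDF lam k) (poissonCDF lam (n + 1))) := by
      ext u
      simp only [Set.mem_inter_iff, Set.mem_Iio, Set.mem_Ico, lt_min_iff]
      constructor
      · rintro ⟨⟨hck, ha, hb⟩, _, _⟩
        exact ⟨ha, hck, hb⟩
      · rintro ⟨ha, hck, hb⟩
        have h0 : 0 ≤ poissonCDF lam n := cdf_nonneg hl.le n
        have h1' := cdf_lt_one hl (n + 1)
        exact ⟨⟨hck, ha, hb⟩, by linarith, by linarith⟩
    rw [hset, Real.volume_Ico]
    by_cases hnk : n + 1 ≤ k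
    · rw [if_pos hnk, min_eq_right (cdf_mono hl.le hnk)]
      congr 1
      rw [cdf_succ]
      ring
    · rw [if_neg hnk]
      have hkn : k ≤ n := by omega
      have hle : min (poissonCDF lam k) (poissonCDF lam (n + 1)) - poissonCDF lam n ≤ 0 := by
        have := cdf_mono hl.le hkn
        have := min_le_left (poissonCDF lam k) (poissonCDF lam (n + 1))
        linarith
      rw [ENNReal.ofReal_of_nonpos hle, ENNReal.ofReal_zero]

lemma pieceB (hmu : 0 < mu) (hlm : mu < lam)
    (h1 : poissonP lam k ≤ poissonP mu k) (m : ℕ) :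
    volume ((Set.Ici (poissonCDF lam k) ∩ f2q lam mu k ⁻¹' {m}) ∩ Set.Ico (0:ℝ) 1) =
      ENNReal.ofReal (qf lam mu k m) := by
  have hl : 0 < lam := hmu.trans hlm
  have hc0 : 0 ≤ poissonCDF lam k := cdf_nonneg hl.le k
  cases m with
  | zero =>
    rw [f2q_preim_zero hmu hlm h1]
    have hset : (Set.Ici (poissonCDF lam k) ∩ (Set.Iio (Phi lam mu k 0) ∪ Set.Ici 1)) ∩
        Set.Ico (0:ℝ) 1 = Set.Ico (poissonCDF lam k) (Phi lam mu k 0) := by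
      ext u
      simp only [Set.mem_inter_iff, Set.mem_Iio, Set.mem_union, Set.mem_Ici, Set.mem_Ico]
      constructor
      · rintro ⟨⟨hck, h0 | h0⟩, hu0, hu1⟩
        · exact ⟨hck, h0⟩
        · linarith
      · intro ⟨hu0, hu⟩
        have := Phi_lt_one hmu hlm h1 0
        exact ⟨⟨hu0, Or.inl hu⟩, by linarith, by linarith⟩
    rw [hset, Real.volume_Ico]
    congr 1
    unfold Phi
    rw [Finset.sum_range_one]
    ring
  | succ n =>
    rw [f2q_preim_succ hmu hlm h1]
    have hset : (Set.Ici (poissonCDF lam k) ∩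
        Set.Ico (Phi lam mu k n) (Phi lam mu k (n + 1))) ∩ Set.Ico (0:ℝ) 1 =
        Set.Ico (Phi lam mu k n) (Phi lam mu k (n + 1)) := by
      ext u
      simp only [Set.mem_inter_iff, Set.mem_Ici, Set.mem_Ico]
      constructor
      · rintro ⟨⟨_, h⟩, _⟩
        exact h
      · intro ⟨ha, hb⟩
        have hgen : poissonCDF lam k ≤ Phi lam mu k n := Phi_ge hmu hlm h1 n
        have := Phi_lt_one hmu hlm h1 (n + 1)
        exact ⟨⟨le_trans hgen ha, ha, hb⟩, by linarith, by linarith⟩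
    rw [hset, Real.volume_Ico]
    congr 1
    rw [Phi_succ]
    ring

lemma map_fq_singleton (hl : 0 < lam) (n : ℕ) :
    (Measure.map (fq lam) (volume.restrict (Set.Ico (0:ℝ) 1))) {n} =
      ENNReal.ofReal (poissonP lam n) := by
  rw [Measure.map_apply (fq_measurable hl) (measurableSet_singleton n),
    Measure.restrict_apply (fq_measurable hl (measurableSet_singleton n))]
  cases n with
  | zero =>
    rw [fq_preim_zero hl]
    have hset : (Set.Iio (poissonCDF lam 0) ∪ Set.Ici 1) ∩ Set.Ico (0:ℝ) 1 =
        Set.Ico 0 (poissonCDF lam 0) := by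
      ext u
      simp only [Set.mem_inter_iff, Set.mem_Iio, Set.mem_union, Set.mem_Ici, Set.mem_Ico]
      constructor
      · rintro ⟨h0 | h0, hu0, hu1⟩
        · exact ⟨hu0, h0⟩
        · linarith
      · intro ⟨hu0, hu⟩
        have := cdf_lt_one hl 0
        exact ⟨Or.inl hu, hu0, by linarith⟩
    rw [hset, Real.volume_Ico, sub_zero]
    congr 1
    unfold poissonCDF
    rw [Finset.sum_range_one]
  | succ n =>
    rw [fq_preim_succ hl]
    have hset : Set.Ico (poissonCDF lam n) (poissonCDF lam (n + 1)) ∩ Set.Ico (0:ℝ) 1 =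
        Set.Ico (poissonCDF lam n) (poissonCDF lam (n + 1)) :=
      Set.inter_eq_left.mpr (Set.Ico_subset_Ico (cdf_nonneg hl.le n) (cdf_lt_one hl (n + 1)).le)
    rw [hset, Real.volume_Ico]
    congr 1
    rw [cdf_succ]
    ring

lemma map_gq_singleton (hmu : 0 < mu) (hlm : mu < lam)
    (h1 : poissonP lam k ≤ poissonP mu k) (m : ℕ) :
    (Measure.map (gq lam mu k) (volume.restrict (Set.Ico (0:ℝ) 1))) {m} =
      ENNReal.ofReal (poissonP mu m) := by
  have hl : 0 < lam := hmu.trans hlm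
  have hgm := gq_measurable hmu hlm h1
  rw [Measure.map_apply hgm (measurableSet_singleton m),
    Measure.restrict_apply (hgm (measurableSet_singleton m)),
    gq_preim, Set.union_inter_distrib_right]
  have hdisj : Disjoint
      ((Set.Iio (poissonCDF lam k) ∩ fq lam ⁻¹' {m}) ∩ Set.Ico (0:ℝ) 1)
      ((Set.Ici (poissonCDF lam k) ∩ f2q lam mu k ⁻¹' {m}) ∩ Set.Ico (0:ℝ) 1) := by
    apply Disjoint.mono (le_trans Set.inter_subset_left Set.inter_subset_left)
      (le_trans Set.inter_subset_left Set.inter_subset_left)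
    exact Set.Iio_disjoint_Ici le_rfl
  have hmeas2 : MeasurableSet
      ((Set.Ici (poissonCDF lam k) ∩ f2q lam mu k ⁻¹' {m}) ∩ Set.Ico (0:ℝ) 1) :=
    ((measurableSet_Ici.inter (f2q_measurable hmu hlm h1 (measurableSet_singleton m))).inter
      measurableSet_Ico)
  rw [measure_union hdisj hmeas2, pieceA hmu hlm m, pieceB hmu hlm h1 m]
  by_cases hmk : m ≤ k
  · rw [if_pos hmk, ← ENNReal.ofReal_add (pP_nonneg hl.le m) (qf_nonneg hmu hlm h1 m)]
    congr 1
    unfold qf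
    rw [if_pos hmk]
    ring
  · rw [if_neg hmk, ENNReal.ofReal_zero, zero_add]
    congr 1
    unfold qf
    rw [if_neg hmk]
    ring

end Marginals

end S16

/-- monotone coupling: if `X, Y` are Poisson with means `lam > mu > 0`
and `k` satisfies `P(X = k) ≤ P(Y = k)` and `P(X ≤ k+1) ≤ P(Y ≤ k)`, then there is a
coupling of `X` and `Y` under which a.s. `X ≥ Y`, `X = Y` whenever `X ≤ k`, and
`X > Y` whenever `X > k`. -/
theorem statement16 (lam mu : ℝ) (hmu : 0 < mu) (hlm : mu < lam) (k : ℕ)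
    (h1 : poissonP lam k ≤ poissonP mu k)
    (h2 : poissonCDF lam (k + 1) ≤ poissonCDF mu k) :
    ∃ ρ : Measure (ℕ × ℕ), IsProbabilityMeasure ρ ∧
      ρ.map Prod.fst = poissonMeasure lam ∧
      ρ.map Prod.snd = poissonMeasure mu ∧
      ∀ᵐ p ∂ρ, p.2 ≤ p.1 ∧ (p.1 ≤ k → p.1 = p.2) ∧ (k < p.1 → p.2 < p.1) := by
  classical
  have hl : 0 < lam := hmu.trans hlm
  set μ0 : Measure ℝ := volume.restrict (Set.Ico (0:ℝ) 1) with hμ0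
  have hfm : Measurable (S16.fq lam) := S16.fq_measurable hl
  have hgm : Measurable (S16.gq lam mu k) := S16.gq_measurable hmu hlm h1
  set h : ℝ → ℕ × ℕ := fun u => (S16.fq lam u, S16.gq lam mu k u) with hh
  have hhm : Measurable h := hfm.prodMk hgm
  haveI : IsProbabilityMeasure μ0 := by
    constructor
    rw [hμ0, Measure.restrict_apply MeasurableSet.univ, Set.univ_inter, Real.volume_Ico]
    norm_num
  refine ⟨Measure.map h μ0, Measure.isProbabilityMeasure_map hhm.aemeasurable, ?_, ?_, ?_⟩
  · rw [Measure.map_map measurable_fst hhm]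
    have he : (Prod.fst ∘ h) = S16.fq lam := rfl
    rw [he]
    calc Measure.map (S16.fq lam) μ0
        = Measure.sum (fun n => (Measure.map (S16.fq lam) μ0) {n} • Measure.dirac n) :=
          (Measure.sum_smul_dirac _).symm
      _ = poissonMeasure lam := by
          unfold _root_.poissonMeasure
          congr 1
          funext n
          rw [S16.map_fq_singleton hl n]
  · rw [Measure.map_map measurable_snd hhm]
    have he : (Prod.snd ∘ h) = S16.gq lam mu k := rfl
    rw [he]
    calc Measure.map (S16.gq lam mu k) μ0
        = Measure.sum (fun n => (Measure.map (S16.gq lam mu k) μ0) {n} • Measure.dirac n) :=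
          (Measure.sum_smul_dirac _).symm
      _ = poissonMeasure mu := by
          unfold _root_.poissonMeasure
          congr 1
          funext n
          rw [S16.map_gq_singleton hmu hlm h1 n]
  · have hs : MeasurableSet {p : ℕ × ℕ |
        p.2 ≤ p.1 ∧ (p.1 ≤ k → p.1 = p.2) ∧ (k < p.1 → p.2 < p.1)} :=
      (Set.to_countable _).measurableSet
    rw [ae_map_iff hhm.aemeasurable hs]
    apply ae_restrict_of_forall_mem measurableSet_Ico
    intro u hu
    have hu1 : u < 1 := hu.2
    simp only [Set.mem_setOf_eq, hh]
    by_cases hc : u < poissonCDF lam k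
    · have hg : S16.gq lam mu k u = S16.fq lam u := if_pos hc
      have hfk : S16.fq lam u ≤ k := (S16.fq_le_iff hl hu1).mpr hc
      refine ⟨le_of_eq hg, fun _ => hg.symm, fun hlt => absurd hfk (not_le.mpr hlt)⟩
    · have hg : S16.gq lam mu k u = S16.f2q lam mu k u := if_neg hc
      push_neg at hc
      have hkey : poissonCDF lam (S16.f2q lam mu k u) ≤ u := by
        cases hf2 : S16.f2q lam mu k u with
        | zero => exact le_trans (S16.cdf_mono hl.le (Nat.zero_le k)) hc
        | succ n =>
          have hlt : n < sInf {m | u < S16.Phi lam mu k m} := by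
            unfold S16.f2q at hf2
            omega
          have hnot : ¬ u < S16.Phi lam mu k n := Nat.notMem_of_lt_sInf hlt
          have hphi : poissonCDF lam (n + 1) ≤ S16.Phi lam mu k n :=
            S16.Phi_ge_cdf hmu hlm h1 h2 n
          linarith [not_lt.mp hnot]
      have hlt2 : S16.f2q lam mu k u < S16.fq lam u := by
        by_contra hcon
        push_neg at hcon
        have := lt_of_lt_of_le (S16.fq_lt hl hu1) (S16.cdf_mono hl.le hcon)
        linarith
      have hfk : k < S16.fq lam u := by
        by_contra hcon
        push_neg at hcon
        have := (S16.fq_le_iff hl hu1).mp hcon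
        linarith
      refine ⟨by rw [hg]; exact hlt2.le, fun hle => absurd hfk (not_lt.mpr hle),
        fun _ => by rw [hg]; exact hlt2⟩
end
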